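/- arXiv:1712.06483 — 11 statements merged into one kernel-verified Lean document; each statement's English description precedes it below -/
import Mathlib

section
/- If n is a positive multiple of 3, then the minimum size of a 2-monopoly in the toroidal grid C_n □ C_n equals n²/3. -/
open SimpleGraph

/-- `M` is a `t`-monopoly in `G`: every vertex outside `M` has at least `t` neighbors in `M`. -/
def IsMonopoly {V : Type*} (G : SimpleGraph V) (t : ℕ) (M : Set V) : Prop :=
  ∀ v ∉ M, t ≤ (G.neighborSet v ∩ M).ncard

/-- The `t`-monopoly number: least cardinality of a `t`-monopoly. -/
noncomputable def monNum {V : Type*} (G : SimpleGraph V) (t : ℕ) : ℕ :=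
  sInf {k | ∃ M : Set V, IsMonopoly G t M ∧ M.ncard = k}

lemma count_mod3 (n a : ℕ) (h3 : 3 ∣ n) :
    (Finset.univ.filter (fun j : Fin n => (a + j.val) % 3 = 0)).card = n / 3 := by
  obtain ⟨d, rfl⟩ := h3
  rcases Nat.eq_zero_or_pos d with rfl | hd
  · simp
  rw [Nat.mul_div_cancel_left d (by norm_num)]
  have key : (Finset.univ.filter (fun j : Fin (3 * d) => (a + j.val) % 3 = 0)).card
      = (Finset.univ : Finset (Fin d)).card := by
    refine Finset.card_nbij' (fun (j : Fin (3 * d)) => (⟨j.val / 3, by omega⟩ : Fin d))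
      (fun (k : Fin d) => (⟨3 * k.val + (3 - a % 3) % 3, by omega⟩ : Fin (3 * d)))
      (fun j _ => Finset.mem_univ _) ?_ ?_ (fun k _ => ?_)
    · intro k _
      simp only [Finset.mem_coe, Finset.mem_filter, Finset.mem_univ, true_and]
      omega
    · intro j hj
      simp only [Finset.mem_coe, Finset.mem_filter, Finset.mem_univ, true_and] at hj
      apply Fin.ext
      simp only []
      omega
    · apply Fin.ext
      simp only []
      omega
  rw [key, Finset.card_univ, Fintype.card_fin]

lemma card_diag (n : ℕ) (h3 : 3 ∣ n) :
    (Finset.univ.filter (fun p : Fin n × Fin n => (p.1.val + p.2.val) % 3 = 0)).card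
      = n ^ 2 / 3 := by
  rw [Finset.card_filter, ← Finset.univ_product_univ, Finset.sum_product]
  calc (∑ i : Fin n, ∑ j : Fin n,
        if (i.val + j.val) % 3 = 0 then 1 else 0)
      = ∑ i : Fin n, (n / 3) := by
        refine Finset.sum_congr rfl fun i _ => ?_
        rw [← Finset.card_filter]
        exact count_mod3 n i.val h3
    _ = n * (n / 3) := by rw [Finset.sum_const, Finset.card_univ, Fintype.card_fin, smul_eq_mul]
    _ = n ^ 2 / 3 := by rw [← Nat.mul_div_assoc n h3, pow_two]

lemma sub_one_val (k : ℕ) (i : Fin (k+3)) : (i - 1).val = (i.val + (k + 2)) % (k + 3) := by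
  rw [Fin.sub_def]
  simp only [Fin.val_mk, Fin.val_one]
  congr 1
  omega

lemma add_one_val (k : ℕ) (i : Fin (k+3)) : (i + 1).val = (i.val + 1) % (k + 3) := by
  rw [Fin.add_def]
  simp only [Fin.val_mk, Fin.val_one]

lemma adj_sub_one (k : ℕ) (i : Fin (k+3)) : (cycleGraph (k+3)).Adj i (i - 1) := by
  rw [cycleGraph_adj']
  left
  have : i - (i - 1) = 1 := by abel
  rw [this]
  rfl

lemma adj_add_one (k : ℕ) (i : Fin (k+3)) : (cycleGraph (k+3)).Adj i (i + 1) := by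
  rw [cycleGraph_adj']
  right
  have : (i + 1) - i = 1 := by abel
  rw [this]
  rfl

lemma upper_monopoly (k : ℕ) (h3 : 3 ∣ (k+3)) :
    IsMonopoly ((cycleGraph (k+3)).boxProd (cycleGraph (k+3))) 2
      {p : Fin (k+3) × Fin (k+3) | (p.1.val + p.2.val) % 3 = 0} := by
  intro v hv
  simp only [Set.mem_setOf_eq] at hv
  obtain ⟨i, j⟩ := v
  simp only at hv
  obtain ⟨d, hd⟩ := h3
  have hval1 : (i - 1).val % 3 = (i.val + 2) % 3 := by
    rw [sub_one_val, Nat.mod_mod_of_dvd _ ⟨d, hd⟩]; omega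
  have hval2 : (j - 1).val % 3 = (j.val + 2) % 3 := by
    rw [sub_one_val, Nat.mod_mod_of_dvd _ ⟨d, hd⟩]; omega
  have hval3 : (i + 1).val % 3 = (i.val + 1) % 3 := by
    rw [add_one_val, Nat.mod_mod_of_dvd _ ⟨d, hd⟩]
  have hval4 : (j + 1).val % 3 = (j.val + 1) % 3 := by
    rw [add_one_val, Nat.mod_mod_of_dvd _ ⟨d, hd⟩]
  have hlt : (i.val + j.val) % 3 < 3 := Nat.mod_lt _ (by norm_num)
  have hcase : (i.val + j.val) % 3 = 1 ∨ (i.val + j.val) % 3 = 2 := by omega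
  rcases hcase with h | h
  · -- residue 1 : use (i-1, j) and (i, j-1)
    have hsub : ({((i-1 : Fin (k+3)), j), (i, (j-1 : Fin (k+3)))} : Set (Fin (k+3) × Fin (k+3)))
        ⊆ ((cycleGraph (k+3)).boxProd (cycleGraph (k+3))).neighborSet (i, j)
          ∩ {p | (p.1.val + p.2.val) % 3 = 0} := by
      rintro p (rfl | rfl)
      · refine ⟨SimpleGraph.boxProd_adj.mpr (Or.inl ⟨adj_sub_one k i, rfl⟩), ?_⟩
        simp only [Set.mem_setOf_eq]
        omega
      · refine ⟨SimpleGraph.boxProd_adj.mpr (Or.inr ⟨adj_sub_one k j, rfl⟩), ?_⟩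
        simp only [Set.mem_setOf_eq]
        omega
    have hne : ((i-1 : Fin (k+3)), j) ≠ (i, (j-1 : Fin (k+3))) := by
      intro hcon
      exact one_ne_zero (sub_eq_self.mp (congrArg Prod.fst hcon))
    calc (2 : ℕ) = ({((i-1 : Fin (k+3)), j), (i, (j-1 : Fin (k+3)))} :
          Set (Fin (k+3) × Fin (k+3))).ncard := (Set.ncard_pair hne).symm
      _ ≤ _ := Set.ncard_le_ncard hsub (Set.toFinite _)
  · -- residue 2 : use (i+1, j) and (i, j+1)
    have hsub : ({((i+1 : Fin (k+3)), j), (i, (j+1 : Fin (k+3)))} : Set (Fin (k+3) × Fin (k+3)))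
        ⊆ ((cycleGraph (k+3)).boxProd (cycleGraph (k+3))).neighborSet (i, j)
          ∩ {p | (p.1.val + p.2.val) % 3 = 0} := by
      rintro p (rfl | rfl)
      · refine ⟨SimpleGraph.boxProd_adj.mpr (Or.inl ⟨adj_add_one k i, rfl⟩), ?_⟩
        simp only [Set.mem_setOf_eq]
        omega
      · refine ⟨SimpleGraph.boxProd_adj.mpr (Or.inr ⟨adj_add_one k j, rfl⟩), ?_⟩
        simp only [Set.mem_setOf_eq]
        omega
    have hne : ((i+1 : Fin (k+3)), j) ≠ (i, (j+1 : Fin (k+3))) := by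
      intro hcon
      have h1 : i + 1 = i := congrArg Prod.fst hcon
      exact one_ne_zero (left_eq_add.mp h1.symm)
    calc (2 : ℕ) = ({((i+1 : Fin (k+3)), j), (i, (j+1 : Fin (k+3)))} :
          Set (Fin (k+3) × Fin (k+3))).ncard := (Set.ncard_pair hne).symm
      _ ≤ _ := Set.ncard_le_ncard hsub (Set.toFinite _)

lemma lower_bound (k : ℕ) (M : Set (Fin (k+3) × Fin (k+3)))
    (hM : IsMonopoly ((cycleGraph (k+3)).boxProd (cycleGraph (k+3))) 2 M) :
    (k+3) ^ 2 / 3 ≤ M.ncard := by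
  classical
  set G2 := (cycleGraph (k+3)).boxProd (cycleGraph (k+3)) with hG2
  have hfin : M.Finite := Set.toFinite M
  set A : Finset (Fin (k+3) × Fin (k+3)) := hfin.toFinset with hA
  have hcard : M.ncard = A.card := Set.ncard_eq_toFinset_card M hfin
  have hvert : ∀ v ∈ Aᶜ, 2 ≤ (A.filter (fun u => G2.Adj v u)).card := by
    intro v hv
    have hvM : v ∉ M := by
      simpa [hA, Set.Finite.mem_toFinset] using Finset.mem_compl.mp hv
    have h2 := hM v hvM
    have heq : G2.neighborSet v ∩ M = ↑(A.filter (fun u => G2.Adj v u)) := by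
      ext u
      constructor
      · rintro ⟨hadj, hu⟩
        simp only [Finset.coe_filter, Set.mem_setOf_eq, hA, Set.Finite.mem_toFinset]
        exact ⟨hu, hadj⟩
      · intro hu
        simp only [Finset.coe_filter, Set.mem_setOf_eq, hA, Set.Finite.mem_toFinset] at hu
        exact ⟨hu.2, hu.1⟩
    rwa [heq, Set.ncard_coe_finset] at h2
  have hsum1 : 2 * Aᶜ.card ≤ ∑ v ∈ Aᶜ, (A.filter (fun u => G2.Adj v u)).card := by
    have := Finset.card_nsmul_le_sum Aᶜ (fun v => (A.filter (fun u => G2.Adj v u)).card) 2 hvert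
    simpa [mul_comm] using this
  have hswap : ∑ v ∈ Aᶜ, (A.filter (fun u => G2.Adj v u)).card
      = ∑ u ∈ A, (Aᶜ.filter (fun v => G2.Adj u v)).card := by
    simp_rw [Finset.card_filter]
    rw [Finset.sum_comm]
    refine Finset.sum_congr rfl fun u _ => Finset.sum_congr rfl fun v _ => ?_
    simp [SimpleGraph.adj_comm]
  have hdeg : ∀ u : Fin (k+3) × Fin (k+3), G2.degree u = 4 := by
    intro u
    show ((cycleGraph (k+3)).boxProd (cycleGraph (k+3))).degree u = 4
    rw [SimpleGraph.degree_boxProd, cycleGraph_degree_three_le, cycleGraph_degree_three_le]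
  have hsum2 : ∑ u ∈ A, (Aᶜ.filter (fun v => G2.Adj u v)).card ≤ 4 * A.card := by
    calc ∑ u ∈ A, (Aᶜ.filter (fun v => G2.Adj u v)).card
        ≤ ∑ u ∈ A, G2.degree u := by
          refine Finset.sum_le_sum fun u _ => ?_
          rw [← SimpleGraph.card_neighborFinset_eq_degree]
          refine Finset.card_le_card fun v hv => ?_
          rw [SimpleGraph.mem_neighborFinset]
          exact (Finset.mem_filter.mp hv).2
      _ = ∑ u ∈ A, 4 := Finset.sum_congr rfl fun u _ => hdeg u
      _ = 4 * A.card := by rw [Finset.sum_const, smul_eq_mul, mul_comm]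
  have hcompl : Aᶜ.card = (k+3) * (k+3) - A.card := by
    rw [Finset.card_compl]
    congr 1
    rw [Fintype.card_prod, Fintype.card_fin]
  have hkey : 2 * ((k+3) * (k+3) - A.card) ≤ 4 * A.card := by
    rw [← hcompl]
    exact le_trans hsum1 (hswap ▸ hsum2)
  rw [hcard, pow_two]
  omega

/-- If `n` is a positive multiple of 3, then `mon₂(Cₙ □ Cₙ) = n²/3`. -/
theorem mon2_torus_mul3 (n : ℕ) (hpos : 0 < n) (h3 : 3 ∣ n) :
    monNum ((cycleGraph n).boxProd (cycleGraph n)) 2 = n ^ 2 / 3 := by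
  obtain ⟨k, rfl⟩ : ∃ k, n = k + 3 := ⟨n - 3, by omega⟩
  have hmem : (k+3) ^ 2 / 3 ∈ {m | ∃ M : Set (Fin (k+3) × Fin (k+3)),
      IsMonopoly ((cycleGraph (k+3)).boxProd (cycleGraph (k+3))) 2 M ∧ M.ncard = m} := by
    refine ⟨{p | (p.1.val + p.2.val) % 3 = 0}, upper_monopoly k h3, ?_⟩
    have heq : ({p : Fin (k+3) × Fin (k+3) | (p.1.val + p.2.val) % 3 = 0} : Set _)
        = ↑(Finset.univ.filter (fun p : Fin (k+3) × Fin (k+3) => (p.1.val + p.2.val) % 3 = 0)) := by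
      ext p; simp
    rw [heq, Set.ncard_coe_finset, card_diag _ h3]
  refine le_antisymm (Nat.sInf_le hmem) ?_
  refine le_csInf ⟨_, hmem⟩ ?_
  rintro m ⟨M, hM, rfl⟩
  exact lower_bound k M hM
end

section
/- If n ≡ 1 (mod 3) with n ≥ 4, then the minimum size of a 2-monopoly in C_n □ C_n is at most (n−1)(n+3)/3. -/
open SimpleGraph

namespace Mon2Aux

lemma range_filter_mod3 (N r : ℕ) (hr : r < 3) :
    ((Finset.range N).filter (fun x => x % 3 = r)).card = (N + 2 - r) / 3 := by
  induction N with
  | zero => simp; omega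
  | succ N ih =>
    rw [Finset.range_add_one, Finset.filter_insert]
    split_ifs with h
    · rw [Finset.card_insert_of_notMem (by simp)]
      omega
    · rw [ih]; omega

lemma fin_filter_mod3 (n r : ℕ) (hr : r < 3) :
    ((Finset.univ : Finset (Fin n)).filter (fun j => j.val % 3 = r)).card = (n + 2 - r) / 3 := by
  rw [← range_filter_mod3 n r hr]
  apply Finset.card_bij (fun j _ => j.val)
  · intro a ha; have := a.isLt; simp at ha ⊢; omega
  · intro a _ b _ h; exact Fin.val_injective h
  · intro x hx
    simp only [Finset.mem_filter, Finset.mem_range] at hx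
    refine ⟨⟨x, hx.1⟩, ?_, rfl⟩
    simp [hx.2]

lemma cyc_adj {n : ℕ} (hn : 4 ≤ n) {a b : Fin n}
    (h : a.val + 1 = b.val ∨ b.val + 1 = a.val ∨ (a.val = 0 ∧ b.val + 1 = n) ∨
      (b.val = 0 ∧ a.val + 1 = n)) : (cycleGraph n).Adj a b := by
  have ha := a.isLt; have hb := b.isLt
  rw [cycleGraph_adj']
  have key : ∀ x y : Fin n, (x - y).val = (n - y.val + x.val) % n := by
    intro x y; rw [Fin.sub_def]
  rw [key, key]
  have m1 : (n - b.val + a.val) % n = if n - b.val + a.val < n then n - b.val + a.val else n - b.val + a.val - n := by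
    split_ifs with h'
    · exact Nat.mod_eq_of_lt h'
    · rw [Nat.mod_eq_sub_mod (by omega), Nat.mod_eq_of_lt (by omega)]
  have m2 : (n - a.val + b.val) % n = if n - a.val + b.val < n then n - a.val + b.val else n - a.val + b.val - n := by
    split_ifs with h'
    · exact Nat.mod_eq_of_lt h'
    · rw [Nat.mod_eq_sub_mod (by omega), Nat.mod_eq_of_lt (by omega)]
  rw [m1, m2]
  split_ifs <;> omega

lemma two_le_ncard {V : Type*} [Finite V] (G : SimpleGraph V) (M : Set V) (v p q : V)
    (hp1 : G.Adj v p) (hp2 : p ∈ M) (hq1 : G.Adj v q) (hq2 : q ∈ M) (hpq : p ≠ q) :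
    2 ≤ (G.neighborSet v ∩ M).ncard := by
  have hsub : ({p, q} : Set V) ⊆ G.neighborSet v ∩ M := by
    intro x hx
    rcases hx with rfl | rfl
    · exact ⟨hp1, hp2⟩
    · exact ⟨hq1, hq2⟩
  calc 2 = ({p, q} : Set V).ncard := (Set.ncard_pair hpq).symm
    _ ≤ _ := Set.ncard_le_ncard hsub (Set.toFinite _)

/-- The 2-monopoly set. -/
def MSet (n : ℕ) : Set (Fin n × Fin n) :=
  {p | ((p.1.val + p.2.val) % 3 = 0 ∧ ¬(p.1.val = 0 ∧ p.2.val + 1 = n)) ∨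
       (p.2.val = 0 ∧ p.1.val % 3 = 2 ∧ 5 ≤ p.1.val) ∨
       (p.1.val = 0 ∧ p.2.val % 3 = 2) ∨
       (p.1.val = 1 ∧ p.2.val + 1 = n)}

lemma mem_MSet {n : ℕ} (c d : ℕ) (hc : c < n) (hd : d < n)
    (h : ((c + d) % 3 = 0 ∧ ¬(c = 0 ∧ d + 1 = n)) ∨ (d = 0 ∧ c % 3 = 2 ∧ 5 ≤ c) ∨
      (c = 0 ∧ d % 3 = 2) ∨ (c = 1 ∧ d + 1 = n)) :
    (⟨⟨c, hc⟩, ⟨d, hd⟩⟩ : Fin n × Fin n) ∈ MSet n := h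

lemma adj_fst {n : ℕ} (hn : 4 ≤ n) {a c : ℕ} (ha : a < n) (hc : c < n) (y : Fin n)
    (h : a + 1 = c ∨ c + 1 = a ∨ (a = 0 ∧ c + 1 = n) ∨ (c = 0 ∧ a + 1 = n)) :
    ((cycleGraph n).boxProd (cycleGraph n)).Adj ⟨⟨a, ha⟩, y⟩ ⟨⟨c, hc⟩, y⟩ := by
  rw [boxProd_adj]
  exact Or.inl ⟨cyc_adj hn (by simpa using h), rfl⟩

lemma adj_snd {n : ℕ} (hn : 4 ≤ n) {b d : ℕ} (hb : b < n) (hd : d < n) (x : Fin n)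
    (h : b + 1 = d ∨ d + 1 = b ∨ (b = 0 ∧ d + 1 = n) ∨ (d = 0 ∧ b + 1 = n)) :
    ((cycleGraph n).boxProd (cycleGraph n)).Adj ⟨x, ⟨b, hb⟩⟩ ⟨x, ⟨d, hd⟩⟩ := by
  rw [boxProd_adj]
  exact Or.inr ⟨cyc_adj hn (by simpa using h), rfl⟩

lemma ne_of_vals {n : ℕ} {a b a' b' : ℕ} (ha : a < n) (hb : b < n)
    (ha' : a' < n) (hb' : b' < n) (h : ¬(a = a' ∧ b = b')) :
    (⟨⟨a, ha⟩, ⟨b, hb⟩⟩ : Fin n × Fin n) ≠ ⟨⟨a', ha'⟩, ⟨b', hb'⟩⟩ := by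
  simp only [ne_eq, Prod.mk.injEq, Fin.mk.injEq]
  exact h

lemma MSet_isMonopoly (n : ℕ) (hn : 4 ≤ n) (h3 : n % 3 = 1) :
    IsMonopoly ((cycleGraph n).boxProd (cycleGraph n)) 2 (MSet n) := by
  intro v hv
  obtain ⟨⟨a, ha⟩, ⟨b, hb⟩⟩ := v
  have hv' : ¬(((a + b) % 3 = 0 ∧ ¬(a = 0 ∧ b + 1 = n)) ∨ (b = 0 ∧ a % 3 = 2 ∧ 5 ≤ a) ∨
      (a = 0 ∧ b % 3 = 2) ∨ (a = 1 ∧ b + 1 = n)) := hv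
  clear hv
  have hs : (a + b) % 3 = 0 ∨ (a + b) % 3 = 1 ∨ (a + b) % 3 = 2 := by omega
  rcases hs with hs | hs | hs
  · -- s = 0 : v = (0, n-1)
    have hab : a = 0 ∧ b + 1 = n := by omega
    exact two_le_ncard _ _ _ ⟨⟨1, by omega⟩, ⟨b, hb⟩⟩ ⟨⟨a, ha⟩, ⟨b - 1, by omega⟩⟩
      (adj_fst hn ha (by omega) _ (by omega))
      (mem_MSet _ _ _ _ (by omega))
      (adj_snd hn hb (by omega) _ (by omega))
      (mem_MSet _ _ _ _ (by omega))
      (ne_of_vals _ _ _ _ (by omega))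
  · -- s = 1
    by_cases h1 : 1 ≤ a ∧ 1 ≤ b
    · exact two_le_ncard _ _ _ ⟨⟨a - 1, by omega⟩, ⟨b, hb⟩⟩ ⟨⟨a, ha⟩, ⟨b - 1, by omega⟩⟩
        (adj_fst hn ha (by omega) _ (by omega))
        (mem_MSet _ _ _ _ (by omega))
        (adj_snd hn hb (by omega) _ (by omega))
        (mem_MSet _ _ _ _ (by omega))
        (ne_of_vals _ _ _ _ (by omega))
    · by_cases h2 : a = 0
      · -- row 0, b % 3 = 1
        exact two_le_ncard _ _ _ ⟨⟨a, ha⟩, ⟨b - 1, by omega⟩⟩ ⟨⟨a, ha⟩, ⟨b + 1, by omega⟩⟩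
          (adj_snd hn hb (by omega) _ (by omega))
          (mem_MSet _ _ _ _ (by omega))
          (adj_snd hn hb (by omega) _ (by omega))
          (mem_MSet _ _ _ _ (by omega))
          (ne_of_vals _ _ _ _ (by omega))
      · -- b = 0, a % 3 = 1
        by_cases h4 : a = 1
        · exact two_le_ncard _ _ _ ⟨⟨a - 1, by omega⟩, ⟨b, hb⟩⟩ ⟨⟨a, ha⟩, ⟨n - 1, by omega⟩⟩
            (adj_fst hn ha (by omega) _ (by omega))
            (mem_MSet _ _ _ _ (by omega))
            (adj_snd hn hb (by omega) _ (by omega))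
            (mem_MSet _ _ _ _ (by omega))
            (ne_of_vals _ _ _ _ (by omega))
        · -- a ≥ 4
          exact two_le_ncard _ _ _ ⟨⟨a - 1, by omega⟩, ⟨b, hb⟩⟩ ⟨⟨a + 1, by omega⟩, ⟨b, hb⟩⟩
            (adj_fst hn ha (by omega) _ (by omega))
            (mem_MSet _ _ _ _ (by omega))
            (adj_fst hn ha (by omega) _ (by omega))
            (mem_MSet _ _ _ _ (by omega))
            (ne_of_vals _ _ _ _ (by omega))
  · -- s = 2
    by_cases hbn : b + 1 = n
    · -- last column, a % 3 = 2
      by_cases h2 : a = 2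
      · exact two_le_ncard _ _ _ ⟨⟨a + 1, by omega⟩, ⟨b, hb⟩⟩ ⟨⟨1, by omega⟩, ⟨b, hb⟩⟩
          (adj_fst hn ha (by omega) _ (by omega))
          (mem_MSet _ _ _ _ (by omega))
          (adj_fst hn ha (by omega) _ (by omega))
          (mem_MSet _ _ _ _ (by omega))
          (ne_of_vals _ _ _ _ (by omega))
      · -- a ≥ 5
        exact two_le_ncard _ _ _ ⟨⟨a + 1, by omega⟩, ⟨b, hb⟩⟩ ⟨⟨a, ha⟩, ⟨0, by omega⟩⟩
          (adj_fst hn ha (by omega) _ (by omega))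
          (mem_MSet _ _ _ _ (by omega))
          (adj_snd hn hb (by omega) _ (by omega))
          (mem_MSet _ _ _ _ (by omega))
          (ne_of_vals _ _ _ _ (by omega))
    · by_cases han : a + 1 = n
      · -- last row, b % 3 = 2
        exact two_le_ncard _ _ _ ⟨⟨a, ha⟩, ⟨b + 1, by omega⟩⟩ ⟨⟨0, by omega⟩, ⟨b, hb⟩⟩
          (adj_snd hn hb (by omega) _ (by omega))
          (mem_MSet _ _ _ _ (by omega))
          (adj_fst hn ha (by omega) _ (by omega))
          (mem_MSet _ _ _ _ (by omega))
          (ne_of_vals _ _ _ _ (by omega))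
      · -- interior
        exact two_le_ncard _ _ _ ⟨⟨a + 1, by omega⟩, ⟨b, hb⟩⟩ ⟨⟨a, ha⟩, ⟨b + 1, by omega⟩⟩
          (adj_fst hn ha (by omega) _ (by omega))
          (mem_MSet _ _ _ _ (by omega))
          (adj_snd hn hb (by omega) _ (by omega))
          (mem_MSet _ _ _ _ (by omega))
          (ne_of_vals _ _ _ _ (by omega))

lemma row_le (n : ℕ) (hn : 4 ≤ n) (h3 : n % 3 = 1) (i : Fin n) :
    ((Finset.univ : Finset (Fin n)).filter
      (fun j => (i.val + j.val) % 3 = 0 ∧ ¬(i.val = 0 ∧ j.val + 1 = n))).card ≤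
      (if i.val % 3 = 0 ∧ i.val ≠ 0 then n / 3 + 1 else n / 3) := by
  have hi := i.isLt
  have sub_mod : ∀ r : ℕ, r < 3 → (∀ j : Fin n, ((i.val + j.val) % 3 = 0 ∧ ¬(i.val = 0 ∧ j.val + 1 = n)) → j.val % 3 = r) →
      ((Finset.univ : Finset (Fin n)).filter
        (fun j => (i.val + j.val) % 3 = 0 ∧ ¬(i.val = 0 ∧ j.val + 1 = n))).card ≤ (n + 2 - r) / 3 := by
    intro r hr him
    calc ((Finset.univ : Finset (Fin n)).filter
        (fun j => (i.val + j.val) % 3 = 0 ∧ ¬(i.val = 0 ∧ j.val + 1 = n))).card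
        ≤ ((Finset.univ : Finset (Fin n)).filter (fun j => j.val % 3 = r)).card := by
          apply Finset.card_le_card
          intro j hj
          simp only [Finset.mem_filter, Finset.mem_univ, true_and] at hj ⊢
          exact him j hj
      _ = (n + 2 - r) / 3 := fin_filter_mod3 n r hr
  split_ifs with h
  · have := sub_mod 0 (by omega) (fun j hj => by omega)
    omega
  · by_cases hi0 : i.val = 0
    · -- row 0 : {j % 3 = 0, j ≠ n-1}
      have hmem : (⟨n - 1, by omega⟩ : Fin n) ∈
          (Finset.univ : Finset (Fin n)).filter (fun j => j.val % 3 = 0) := by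
        simp; omega
      have hcalc : ((Finset.univ : Finset (Fin n)).filter
          (fun j => (i.val + j.val) % 3 = 0 ∧ ¬(i.val = 0 ∧ j.val + 1 = n))).card ≤
          (((Finset.univ : Finset (Fin n)).filter (fun j => j.val % 3 = 0)).erase ⟨n - 1, by omega⟩).card := by
        apply Finset.card_le_card
        intro j hj
        have := j.isLt
        simp only [Finset.mem_filter, Finset.mem_univ, true_and, Finset.mem_erase, ne_eq,
          Fin.ext_iff] at hj ⊢
        omega
      rw [Finset.card_erase_of_mem hmem, fin_filter_mod3 n 0 (by omega)] at hcalc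
      omega
    · have h12 : i.val % 3 = 1 ∨ i.val % 3 = 2 := by omega
      rcases h12 with h1 | h2
      · have := sub_mod 2 (by omega) (fun j hj => by omega)
        omega
      · have := sub_mod 1 (by omega) (fun j hj => by omega)
        omega

lemma MSet_ncard_le (n : ℕ) (hn : 4 ≤ n) (h3 : n % 3 = 1) :
    (MSet n).ncard ≤ (n / 3) * (n + 3) := by
  classical
  set k := n / 3 with hk
  have hMeq : MSet n = ↑(Finset.univ.filter (fun p : Fin n × Fin n => p ∈ MSet n)) := by
    ext p; simp
  rw [hMeq, Set.ncard_coe_finset]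
  set A := Finset.univ.filter (fun p : Fin n × Fin n =>
    (p.1.val + p.2.val) % 3 = 0 ∧ ¬(p.1.val = 0 ∧ p.2.val + 1 = n)) with hA
  set B := Finset.univ.filter (fun p : Fin n × Fin n =>
    p.2.val = 0 ∧ p.1.val % 3 = 2 ∧ 5 ≤ p.1.val) with hB
  set C := Finset.univ.filter (fun p : Fin n × Fin n =>
    p.1.val = 0 ∧ p.2.val % 3 = 2) with hC
  set D := Finset.univ.filter (fun p : Fin n × Fin n =>
    p.1.val = 1 ∧ p.2.val + 1 = n) with hD
  have hsub : Finset.univ.filter (fun p : Fin n × Fin n => p ∈ MSet n) ⊆ A ∪ B ∪ C ∪ D := by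
    intro p hp
    simp only [hA, hB, hC, hD, Finset.mem_union, Finset.mem_filter, Finset.mem_univ, true_and] at hp ⊢
    have hp' : p ∈ MSet n := hp
    simp only [MSet, Set.mem_setOf_eq] at hp'
    tauto
  have hcardA : A.card ≤ k * n + k := by
    rw [Finset.card_eq_sum_card_fiberwise
      (f := Prod.fst) (t := Finset.univ) (fun x _ => Finset.mem_univ _)]
    have hrow : ∀ i : Fin n, (A.filter (fun p => p.1 = i)).card =
        ((Finset.univ : Finset (Fin n)).filter
          (fun j => (i.val + j.val) % 3 = 0 ∧ ¬(i.val = 0 ∧ j.val + 1 = n))).card := by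
      intro i
      apply Finset.card_bij (fun p _ => p.2)
      · intro p hp
        simp only [hA, Finset.mem_filter, Finset.mem_univ, true_and] at hp ⊢
        rw [hp.2] at hp
        exact hp.1
      · intro p hp q hq hpq
        simp only [hA, Finset.mem_filter] at hp hq
        exact Prod.ext (hp.2.trans hq.2.symm) hpq
      · intro j hj
        simp only [Finset.mem_filter, Finset.mem_univ, true_and] at hj
        exact ⟨(i, j), by simp only [hA, Finset.mem_filter, Finset.mem_univ, true_and, and_true]; exact hj, rfl⟩
    calc ∑ i : Fin n, (A.filter (fun p => p.1 = i)).card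
        ≤ ∑ i : Fin n, (if i.val % 3 = 0 ∧ i.val ≠ 0 then k + 1 else k) := by
          apply Finset.sum_le_sum
          intro i _
          rw [hrow i]
          exact row_le n hn h3 i
      _ = ∑ i : Fin n, (k + if i.val % 3 = 0 ∧ i.val ≠ 0 then 1 else 0) := by
          apply Finset.sum_congr rfl; intro i _; split_ifs <;> omega
      _ = n * k + ((Finset.univ : Finset (Fin n)).filter
            (fun i => i.val % 3 = 0 ∧ i.val ≠ 0)).card := by
          rw [Finset.sum_add_distrib, Finset.sum_const, Finset.card_univ, Fintype.card_fin,
            Finset.sum_boole]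
          simp
      _ ≤ n * k + k := by
          have hmem0 : (⟨0, by omega⟩ : Fin n) ∈
              (Finset.univ : Finset (Fin n)).filter (fun j => j.val % 3 = 0) := by simp
          have hsub0 : ((Finset.univ : Finset (Fin n)).filter (fun i => i.val % 3 = 0 ∧ i.val ≠ 0))
              ⊆ ((Finset.univ : Finset (Fin n)).filter (fun j => j.val % 3 = 0)).erase ⟨0, by omega⟩ := by
            intro j hj
            simp only [Finset.mem_filter, Finset.mem_univ, true_and, Finset.mem_erase, ne_eq,
              Fin.ext_iff] at hj ⊢
            omega
          have := le_trans (Finset.card_le_card hsub0)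
            (le_of_eq (Finset.card_erase_of_mem hmem0))
          rw [fin_filter_mod3 n 0 (by omega)] at this
          omega
      _ = k * n + k := by ring_nf
  have hcardB : B.card ≤ k - 1 := by
    have hmem2 : (⟨2, by omega⟩ : Fin n) ∈
        (Finset.univ : Finset (Fin n)).filter (fun j => j.val % 3 = 2) := by simp
    have : B.card ≤ (((Finset.univ : Finset (Fin n)).filter
        (fun j => j.val % 3 = 2)).erase ⟨2, by omega⟩).card := by
      apply Finset.card_le_card_of_injOn (fun p => p.1)
      · intro p hp
        simp only [hB, Finset.mem_coe, Finset.mem_filter, Finset.mem_univ, true_and] at hp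
        simp only [Finset.mem_coe, Finset.mem_erase, ne_eq, Fin.ext_iff, Finset.mem_filter, Finset.mem_univ,
          true_and]
        omega
      · intro p hp q hq hpq
        simp only [hB, Finset.coe_filter, Set.mem_setOf_eq, Finset.mem_univ, true_and] at hp hq
        exact Prod.ext hpq (Fin.val_injective (hp.1.trans hq.1.symm))
    rw [Finset.card_erase_of_mem hmem2, fin_filter_mod3 n 2 (by omega)] at this
    omega
  have hcardC : C.card ≤ k := by
    have : C.card ≤ ((Finset.univ : Finset (Fin n)).filter (fun j => j.val % 3 = 2)).card := by
      apply Finset.card_le_card_of_injOn (fun p => p.2)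
      · intro p hp
        simp only [hC, Finset.mem_coe, Finset.mem_filter, Finset.mem_univ, true_and] at hp
        simp only [Finset.mem_coe, Finset.mem_filter, Finset.mem_univ, true_and]
        omega
      · intro p hp q hq hpq
        simp only [hC, Finset.coe_filter, Set.mem_setOf_eq, Finset.mem_univ, true_and] at hp hq
        exact Prod.ext (Fin.val_injective (hp.1.trans hq.1.symm)) hpq
    rw [fin_filter_mod3 n 2 (by omega)] at this
    omega
  have hcardD : D.card ≤ 1 := by
    rw [Finset.card_le_one]
    intro p hp q hq
    simp only [hD, Finset.mem_filter, Finset.mem_univ, true_and] at hp hq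
    exact Prod.ext (Fin.val_injective (by omega)) (Fin.val_injective (by omega))
  have htot : (Finset.univ.filter (fun p : Fin n × Fin n => p ∈ MSet n)).card ≤
      A.card + B.card + C.card + D.card := by
    calc (Finset.univ.filter (fun p : Fin n × Fin n => p ∈ MSet n)).card
        ≤ (A ∪ B ∪ C ∪ D).card := Finset.card_le_card hsub
      _ ≤ (A ∪ B ∪ C).card + D.card := Finset.card_union_le _ _
      _ ≤ (A ∪ B).card + C.card + D.card := by
          have := Finset.card_union_le (A ∪ B) C; omega
      _ ≤ A.card + B.card + C.card + D.card := by
          have := Finset.card_union_le A B; omega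
  have hkn : k * (n + 3) = k * n + 3 * k := by ring
  have hk1 : 1 ≤ k := by omega
  omega

end Mon2Aux

/-- If `n ≡ 1 (mod 3)`, `n ≥ 4`, then `mon₂(Cₙ □ Cₙ) ≤ (n−1)(n+3)/3`. -/
theorem mon2_torus_mod1 (n : ℕ) (hn : 4 ≤ n) (h3 : n % 3 = 1) :
    monNum ((cycleGraph n).boxProd (cycleGraph n)) 2 ≤ (n - 1) * (n + 3) / 3 := by
  have h1 : monNum ((cycleGraph n).boxProd (cycleGraph n)) 2 ≤ (Mon2Aux.MSet n).ncard :=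
    Nat.sInf_le ⟨Mon2Aux.MSet n, Mon2Aux.MSet_isMonopoly n hn h3, rfl⟩
  have h2 := Mon2Aux.MSet_ncard_le n hn h3
  have h4 : (n / 3) * (n + 3) = (n - 1) * (n + 3) / 3 := by
    obtain ⟨k, hk⟩ : ∃ k, n = 3 * k + 1 := ⟨n / 3, by omega⟩
    subst hk
    have e1 : 3 * k + 1 - 1 = 3 * k := by omega
    have e2 : (3 * k + 1) / 3 = k := by omega
    rw [e1, e2]
    rw [show 3 * k * (3 * k + 1 + 3) = 3 * (k * (3 * k + 1 + 3)) by ring]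
    rw [Nat.mul_div_cancel_left _ (by norm_num : 0 < 3)]
  omega
end

section
/- If n ≡ 2 (mod 3) with n ≥ 5, then the minimum size of a 2-monopoly in C_n □ C_n is at most (n+1)²/3 − 1. -/
open SimpleGraph

/-!
Colour `(a, b)` by `(a + b) mod 3`. Colour 0 would be a 2-monopoly if the grid did not wrap
around: a vertex of colour 1 has its left and lower neighbours of colour 0, a vertex of colour 2
its right and upper ones. For `n = 3m + 2` the wrap-around only fails along the seam, row and
column `n - 1`, and adding the vertices of colour 2 there repairs it. Every row but the last then
holds `m + 1` vertices and the last `2m + 1`, in total `3(m + 1)² - 1 = (n + 1)²/3 - 1`.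
-/

open Finset

theorem monNum_le_ncard {V : Type*} {G : SimpleGraph V} {t : ℕ} {M : Set V}
    (hM : IsMonopoly G t M) : monNum G t ≤ M.ncard :=
  Nat.sInf_le ⟨M, hM, rfl⟩

theorem isMonopoly_boxProd_two {α β : Type*} [Finite α] [Finite β] {G : SimpleGraph α}
    {H : SimpleGraph β} {M : Set (α × β)}
    (h : ∀ a b, (a, b) ∉ M →
      ∃ a' b', G.Adj a a' ∧ H.Adj b b' ∧ (a', b) ∈ M ∧ (a, b') ∈ M) :
    IsMonopoly (G □ H) 2 M := by
  rintro ⟨a, b⟩ hab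
  obtain ⟨a', b', ha, hb, ha'M, hb'M⟩ := h a b hab
  refine (Set.one_lt_ncard).2 ⟨(a', b), ⟨boxProd_adj.2 (.inl ⟨ha, rfl⟩), ha'M⟩,
    (a, b'), ⟨boxProd_adj.2 (.inr ⟨hb, rfl⟩), hb'M⟩, ?_⟩
  simp [ha.ne']

theorem cycleGraph_adj_add_one {k : ℕ} (x : Fin (k + 2)) : (cycleGraph (k + 2)).Adj x (x + 1) :=
  cycleGraph_adj.2 (.inr (add_sub_cancel_left x 1))

theorem cycleGraph_adj_sub_one {k : ℕ} (x : Fin (k + 2)) : (cycleGraph (k + 2)).Adj x (x - 1) :=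
  cycleGraph_adj.2 (.inl (sub_sub_cancel x 1))

theorem card_filter_range_add_mod_three_eq_zero (p m : ℕ) :
    #{j ∈ range (3 * m + 2) | (p + j) % 3 = 0} = if p % 3 = 1 then m else m + 1 := by
  have h := Nat.count_modEq_card (r := 3) (b := 3 * m + 2) (by norm_num) (2 * p)
  rw [Nat.count_eq_card_filter_range] at h
  rw [filter_congr (q := (· ≡ 2 * p [MOD 3])) (fun j _ => by simp only [Nat.ModEq]; omega), h]
  split_ifs <;> omega

def TorusMonopolyPred (n a b : ℕ) : Prop :=
  (a + b) % 3 = 0 ∨ ((a + b) % 3 = 2 ∧ (a + 1 = n ∨ b + 1 = n))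

instance (n a b : ℕ) : Decidable (TorusMonopolyPred n a b) := by
  unfold TorusMonopolyPred; infer_instance

def torusMonopoly (n : ℕ) : Finset (Fin n × Fin n) := {v | TorusMonopolyPred n v.1 v.2}

theorem mem_torusMonopoly {n : ℕ} {v : Fin n × Fin n} :
    v ∈ torusMonopoly n ↔ TorusMonopolyPred n v.1 v.2 := by
  simp [torusMonopoly]

theorem card_filter_range_torusMonopolyPred (m a : ℕ) :
    #{j ∈ range (3 * m + 2) | TorusMonopolyPred (3 * m + 2) a j}
      = if a + 1 = 3 * m + 2 then 2 * m + 1 else m + 1 := by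
  simp only [TorusMonopolyPred]
  rw [filter_or, card_union_of_disjoint (disjoint_filter.2 fun j _ h => by omega),
    card_filter_range_add_mod_three_eq_zero]
  split_ifs with ha hlast hlast
  · rw [filter_congr (q := fun j => (a + 1 + j) % 3 = 0) (fun j _ => by omega),
      card_filter_range_add_mod_three_eq_zero, if_neg (by omega)]
    omega
  · rw [filter_congr (q := (· = 3 * m + 1)) (fun j _ => by omega), filter_eq',
      if_pos (mem_range.2 (by omega)), card_singleton]
  · omega
  · rw [filter_false_of_mem (fun j _ => by omega), card_empty]

theorem card_torusMonopoly (m : ℕ) : #(torusMonopoly (3 * m + 2)) = 3 * (m + 1) ^ 2 - 1 := by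
  have row_sum (i : ℕ) :
      ∑ j : Fin (3 * m + 2), (if TorusMonopolyPred (3 * m + 2) i j then 1 else 0)
        = if i + 1 = 3 * m + 2 then 2 * m + 1 else m + 1 := by
    rw [Fin.sum_univ_eq_sum_range (fun j => if TorusMonopolyPred (3 * m + 2) i j then 1 else 0),
      ← card_filter, card_filter_range_torusMonopolyPred]
  rw [torusMonopoly, card_filter, Fintype.sum_prod_type]
  simp only [row_sum]
  rw [Fin.sum_univ_eq_sum_range (fun i => if i + 1 = 3 * m + 2 then 2 * m + 1 else m + 1),
    sum_range_succ, if_pos rfl, sum_congr rfl (fun i hi => if_neg (by rw [mem_range] at hi; omega)),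
    sum_const, card_range, smul_eq_mul]
  have : 3 * (m + 1) ^ 2 = (3 * m + 1) * (m + 1) + (2 * m + 1) + 1 := by ring
  omega

theorem isMonopoly_torusMonopoly (m : ℕ) :
    IsMonopoly (cycleGraph (3 * m + 2) □ cycleGraph (3 * m + 2)) 2
      (torusMonopoly (3 * m + 2) : Set (Fin (3 * m + 2) × Fin (3 * m + 2))) := by
  apply isMonopoly_boxProd_two
  intro i j hij
  simp only [mem_coe, mem_torusMonopoly, TorusMonopolyPred] at hij ⊢
  by_cases h : (i.val + j.val) % 3 = 1
  · refine ⟨i - 1, j - 1, cycleGraph_adj_sub_one i, cycleGraph_adj_sub_one j, ?_, ?_⟩ <;>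
    · simp only [Fin.coe_sub_one, Fin.ext_iff, Fin.val_zero]
      split_ifs <;> omega
  · have hi : i.val + 1 < 3 * m + 2 := by omega
    have hj : j.val + 1 < 3 * m + 2 := by omega
    refine ⟨i + 1, j + 1, cycleGraph_adj_add_one i, cycleGraph_adj_add_one j, ?_, ?_⟩
    · rw [Fin.val_add_one_of_lt' hi]; omega
    · rw [Fin.val_add_one_of_lt' hj]; omega

theorem mon2_torus_mod2_general (n : ℕ) (h3 : n % 3 = 2) :
    monNum ((cycleGraph n).boxProd (cycleGraph n)) 2 ≤ (n + 1) ^ 2 / 3 - 1 := by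
  obtain ⟨m, rfl⟩ : ∃ m, n = 3 * m + 2 := ⟨n / 3, by omega⟩
  calc monNum _ 2
      ≤ (torusMonopoly (3 * m + 2) : Set (Fin (3 * m + 2) × Fin (3 * m + 2))).ncard :=
        monNum_le_ncard (isMonopoly_torusMonopoly m)
    _ = 3 * (m + 1) ^ 2 - 1 := by rw [Set.ncard_coe_finset, card_torusMonopoly]
    _ = (3 * m + 2 + 1) ^ 2 / 3 - 1 := by
        rw [show (3 * m + 2 + 1) ^ 2 = 3 * (3 * (m + 1) ^ 2) by ring,
          Nat.mul_div_cancel_left _ three_pos]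

/-- If `n ≡ 2 (mod 3)`, `n ≥ 5`, then `mon₂(Cₙ □ Cₙ) ≤ (n+1)²/3 − 1`. -/
theorem mon2_torus_mod2 (n : ℕ) (hn : 5 ≤ n) (h3 : n % 3 = 2) :
    monNum ((cycleGraph n).boxProd (cycleGraph n)) 2 ≤ (n + 1) ^ 2 / 3 - 1 :=
  mon2_torus_mod2_general n h3
end

section
/- Let m be even, and let t, n be integers with t − 1 ≤ n ≤ 2(t−2). Then the minimum size of a t-monopoly in C_m □ K_n equals m(t−2). -/
open SimpleGraph

private lemma fin_add_one_parity {m : ℕ} (hme : Even (m + 2)) (i : Fin (m + 2)) :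
    Even ((i + 1 : Fin (m + 2)) : ℕ) ↔ ¬ Even (i : ℕ) := by
  have hv : ((i + 1 : Fin (m + 2)) : ℕ) = ((i : ℕ) + 1) % (m + 2) := by
    rw [Fin.val_add, Fin.val_one]
  obtain ⟨k, hk⟩ := hme
  have h2 : (2 : ℕ) ∣ (m + 2) := ⟨k, by omega⟩
  rw [hv, Nat.even_iff, Nat.even_iff, Nat.mod_mod_of_dvd _ h2]
  omega

private lemma fin_sub_one_parity {m : ℕ} (hme : Even (m + 2)) (i : Fin (m + 2)) :
    Even ((i - 1 : Fin (m + 2)) : ℕ) ↔ ¬ Even (i : ℕ) := by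
  have h := fin_add_one_parity hme (i - 1)
  rw [sub_add_cancel] at h
  tauto

private lemma fin_two_ne_zero {m : ℕ} (hm : 1 ≤ m) : (1 : Fin (m + 2)) + 1 ≠ 0 := by
  intro h
  have hv : ((1 + 1 : Fin (m + 2)) : ℕ) = 2 % (m + 2) := by
    rw [Fin.val_add, Fin.val_one]
  rw [h] at hv
  simp only [Fin.val_zero] at hv
  rw [Nat.mod_eq_of_lt (by omega)] at hv
  omega

open Finset in
private lemma lower_bound_s3 {m n t : ℕ} (ht : 2 ≤ t) (hn : t - 2 ≤ n)
    (M : Set (Fin (m + 2) × Fin n))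
    (hM : IsMonopoly ((cycleGraph (m + 2)).boxProd (completeGraph (Fin n))) t M) :
    (m + 2) * (t - 2) ≤ M.ncard := by
  classical
  have hfin : M.Finite := Set.toFinite M
  set F := hfin.toFinset with hF
  have hcard : M.ncard = F.card := Set.ncard_eq_toFinset_card _ hfin
  have hsum : F.card = ∑ i : Fin (m + 2), (F.filter (fun p => p.1 = i)).card :=
    card_eq_sum_card_fiberwise (fun p _ => mem_univ p.1)
  have hfib : ∀ i : Fin (m + 2), t - 2 ≤ (F.filter (fun p => p.1 = i)).card := by
    intro i
    by_cases hall : ∀ j : Fin n, (i, j) ∈ M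
    · have hsubset : (univ.image (fun j : Fin n => ((i, j) : Fin (m + 2) × Fin n)))
          ⊆ F.filter (fun p => p.1 = i) := by
        intro p hp
        simp only [mem_image, mem_univ, true_and] at hp
        obtain ⟨j, rfl⟩ := hp
        exact mem_filter.mpr ⟨hfin.mem_toFinset.mpr (hall j), rfl⟩
      have hcardim : (univ.image (fun j : Fin n => ((i, j) : Fin (m + 2) × Fin n))).card = n := by
        rw [card_image_of_injective _ (fun a b h => by injection h), card_univ, Fintype.card_fin]
      have := card_le_card hsubset
      omega
    · push_neg at hall
      obtain ⟨j, hj⟩ := hall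
      have hmono := hM (i, j) hj
      have hsub : ((cycleGraph (m + 2)).boxProd (completeGraph (Fin n))).neighborSet (i, j) ∩ M
          ⊆ (↑(F.filter (fun p => p.1 = i)) : Set _) ∪ {(i - 1, j), (i + 1, j)} := by
        rintro ⟨a, b⟩ ⟨hadj, hmem⟩
        simp only [mem_neighborSet, boxProd_adj] at hadj
        rcases hadj with ⟨hc, hb⟩ | ⟨_, ha⟩
        · rw [cycleGraph_adj] at hc
          right
          subst hb
          rcases hc with h | h
          · have ha : a = i - 1 := by
              rw [eq_sub_iff_add_eq]
              exact (sub_eq_iff_eq_add'.mp h).symm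
            subst ha
            exact Set.mem_insert _ _
          · have ha : a = i + 1 := sub_eq_iff_eq_add'.mp h
            subst ha
            exact Set.mem_insert_of_mem _ rfl
        · left
          simp only [coe_filter, Set.mem_setOf_eq, hF, Set.Finite.mem_toFinset]
          exact ⟨hmem, ha.symm⟩
      have hle := Set.ncard_le_ncard hsub (Set.toFinite _)
      have hun := Set.ncard_union_le
        ((↑(F.filter (fun p : Fin (m + 2) × Fin n => p.1 = i)) : Set _))
        ({((i - 1 : Fin (m + 2)), j), ((i + 1 : Fin (m + 2)), j)} : Set _)
      rw [Set.ncard_coe_finset] at hun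
      have hpair : ({((i - 1 : Fin (m + 2)), j), ((i + 1 : Fin (m + 2)), j)} : Set _).ncard ≤ 2 := by
        have h1 := Set.ncard_insert_le ((i - 1 : Fin (m + 2)), j)
          ({((i + 1 : Fin (m + 2)), j)} : Set _)
        rw [Set.ncard_singleton] at h1
        exact h1
      omega
  calc (m + 2) * (t - 2) = ∑ _i : Fin (m + 2), (t - 2) := by
        rw [sum_const, card_univ, Fintype.card_fin, smul_eq_mul]
    _ ≤ ∑ i : Fin (m + 2), (F.filter (fun p => p.1 = i)).card :=
        sum_le_sum (fun i _ => hfib i)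
    _ = M.ncard := by rw [← hsum, hcard]

open Finset in
private lemma construction {m n t : ℕ} (hm : 1 ≤ m) (hme : Even (m + 2)) (ht : 3 ≤ t)
    (hn1 : t - 1 ≤ n) (hn2 : n ≤ 2 * (t - 2)) :
    ∃ M : Set (Fin (m + 2) × Fin n),
      IsMonopoly ((cycleGraph (m + 2)).boxProd (completeGraph (Fin n))) t M ∧
      M.ncard = (m + 2) * (t - 2) := by
  classical
  have hs1 : t - 2 < n := by omega
  have hs2 : n - (t - 2) < n := by omega
  set col : Fin (m + 2) → Finset (Fin n) :=
    fun i => if Even (i : ℕ) then Iio ⟨t - 2, hs1⟩ else Ici ⟨n - (t - 2), hs2⟩ with hcol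
  set F : Finset (Fin (m + 2) × Fin n) :=
    univ.biUnion (fun i => (col i).image (fun j => (i, j))) with hFdef
  have hFmem : ∀ a b, ((a, b) ∈ F) ↔ b ∈ col a := by
    intro a b
    simp only [hFdef, mem_biUnion, mem_univ, true_and, mem_image, Prod.mk.injEq]
    constructor
    · rintro ⟨i, j, hj, rfl, rfl⟩; exact hj
    · intro h; exact ⟨a, b, h, rfl, rfl⟩
  have hcolcard : ∀ i, (col i).card = t - 2 := by
    intro i
    simp only [hcol]
    split
    · rw [Fin.card_Iio]
    · rw [Fin.card_Ici]
      show n - (n - (t - 2)) = t - 2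
      omega
  have hopp : ∀ (i a : Fin (m + 2)) (j : Fin n), j ∉ col i →
      (Even (a : ℕ) ↔ ¬ Even (i : ℕ)) → j ∈ col a := by
    intro i a j hj hpar
    by_cases he : Even (i : ℕ)
    · have ha : ¬ Even (a : ℕ) := by tauto
      simp only [hcol, he, if_true, mem_Iio, Fin.lt_def, not_lt] at hj
      simp only [hcol, ha, if_false, mem_Ici, Fin.le_def]
      show n - (t - 2) ≤ (j : ℕ)
      have : t - 2 ≤ (j : ℕ) := hj
      omega
    · have ha : Even (a : ℕ) := by tauto
      simp only [hcol, he, if_false, mem_Ici, Fin.le_def, not_le] at hj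
      simp only [hcol, ha, if_true, mem_Iio, Fin.lt_def]
      show (j : ℕ) < t - 2
      have : (j : ℕ) < n - (t - 2) := hj
      omega
  have hone_ne : ∀ i : Fin (m + 2), i + 1 ≠ i := by
    intro i h
    have h0 : (1 : Fin (m + 2)) = 0 := left_eq_add.mp h.symm
    have hv := congrArg Fin.val h0
    rw [Fin.val_one, Fin.val_zero] at hv
    omega
  have hsub_ne : ∀ i : Fin (m + 2), i - 1 ≠ i := by
    intro i h
    have h2 : i = i + 1 := sub_eq_iff_eq_add.mp h
    exact hone_ne i h2.symm
  have hne : ∀ i : Fin (m + 2), (i - 1 : Fin (m + 2)) ≠ i + 1 := by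
    intro i h
    have h0 := sub_eq_iff_eq_add.mp h
    rw [add_assoc] at h0
    exact fin_two_ne_zero hm (left_eq_add.mp h0)
  refine ⟨(↑F : Set _), ?_, ?_⟩
  · rintro ⟨i, j⟩ hv
    rw [Finset.mem_coe, hFmem] at hv
    set B : Finset (Fin (m + 2) × Fin n) :=
      (col i).image (fun j' => (i, j')) ∪ {(i - 1, j), (i + 1, j)} with hBdef
    have hBsub : (↑B : Set _) ⊆
        ((cycleGraph (m + 2)).boxProd (completeGraph (Fin n))).neighborSet (i, j)
          ∩ (↑F : Set _) := by
      intro p hp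
      simp only [hBdef, coe_union, Set.mem_union, Finset.mem_coe, mem_image,
        mem_insert, mem_singleton] at hp
      rcases hp with ⟨j', hj', rfl⟩ | rfl | rfl
      · refine ⟨boxProd_adj.mpr (Or.inr ⟨?_, rfl⟩), Finset.mem_coe.mpr ((hFmem _ _).mpr hj')⟩
        intro hjj
        apply hv
        rwa [show j = j' from hjj]
      · refine ⟨boxProd_adj.mpr (Or.inl ⟨?_, rfl⟩), Finset.mem_coe.mpr ((hFmem _ _).mpr ?_)⟩
        · exact cycleGraph_adj.mpr (Or.inl (sub_sub_cancel i 1))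
        · exact hopp i (i - 1) j hv (fin_sub_one_parity hme i)
      · refine ⟨boxProd_adj.mpr (Or.inl ⟨?_, rfl⟩), Finset.mem_coe.mpr ((hFmem _ _).mpr ?_)⟩
        · exact cycleGraph_adj.mpr (Or.inr (add_sub_cancel_left i 1))
        · exact hopp i (i + 1) j hv (fin_add_one_parity hme i)
    have hBcard : B.card = t := by
      rw [hBdef, card_union_of_disjoint, card_image_of_injective _ (fun a b h => by injection h),
        hcolcard]
      · have hp2 : ({((i - 1 : Fin (m + 2)), j), ((i + 1 : Fin (m + 2)), j)} :
            Finset (Fin (m + 2) × Fin n)).card = 2 := by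
          rw [card_insert_of_notMem, card_singleton]
          simp only [mem_singleton, Prod.mk.injEq, not_and]
          intro h
          exact absurd h (hne i)
        rw [hp2]
        omega
      · rw [Finset.disjoint_left]
        rintro ⟨a, b⟩ hp hq
        simp only [mem_image] at hp
        obtain ⟨j', _, hj'⟩ := hp
        injection hj' with h1 _
        simp only [mem_insert, mem_singleton, Prod.mk.injEq] at hq
        rcases hq with ⟨ha, _⟩ | ⟨ha, _⟩
        · exact hsub_ne i (h1.trans ha).symm
        · exact hone_ne i (h1.trans ha).symm
    calc t = B.card := hBcard.symm
      _ = (↑B : Set _).ncard := (Set.ncard_coe_finset B).symm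
      _ ≤ _ := Set.ncard_le_ncard hBsub (Set.toFinite _)
  · rw [Set.ncard_coe_finset, hFdef, card_biUnion]
    · rw [Finset.sum_congr rfl
        (fun i _ => by rw [card_image_of_injective _ (fun a b h => by injection h), hcolcard])]
      rw [sum_const, card_univ, Fintype.card_fin, smul_eq_mul]
    · intro x _ y _ hxy
      rw [Function.onFun, Finset.disjoint_left]
      rintro ⟨a, b⟩ hp hq
      simp only [mem_image] at hp hq
      obtain ⟨_, _, hp⟩ := hp
      obtain ⟨_, _, hq⟩ := hq
      injection hp with hp1 _
      injection hq with hq1 _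
      exact hxy (hp1.trans hq1.symm)

/-- For even `m` and `t − 1 ≤ n ≤ 2(t−2)`, `mon_t(C_m □ K_n) = m(t−2)`. -/
theorem mon_cycle_complete_low (m n t : ℕ) (hm : 3 ≤ m) (hme : Even m)
    (h1 : (t : ℤ) - 1 ≤ (n : ℤ)) (h2 : (n : ℤ) ≤ 2 * ((t : ℤ) - 2)) :
    monNum ((cycleGraph m).boxProd (completeGraph (Fin n))) t = m * (t - 2) := by
  obtain ⟨m', rfl⟩ : ∃ m', m = m' + 2 := ⟨m - 2, by omega⟩
  obtain ⟨k, hk⟩ := hme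
  have ht : 3 ≤ t := by omega
  have hn1 : t - 1 ≤ n := by omega
  have hn2 : n ≤ 2 * (t - 2) := by omega
  have hm1 : 1 ≤ m' := by omega
  have hme' : Even (m' + 2) := ⟨k, hk⟩
  obtain ⟨M, hMmono, hMcard⟩ := construction hm1 hme' ht hn1 hn2
  apply le_antisymm
  · exact Nat.sInf_le ⟨M, hMmono, hMcard⟩
  · have hnonempty : {k | ∃ M : Set (Fin (m' + 2) × Fin n),
        IsMonopoly ((cycleGraph (m' + 2)).boxProd (completeGraph (Fin n))) t M ∧
        M.ncard = k}.Nonempty := ⟨(m' + 2) * (t - 2), M, hMmono, hMcard⟩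
    obtain ⟨M', hM', hcard'⟩ := Nat.sInf_mem hnonempty
    rw [monNum, ← hcard']
    exact lower_bound_s3 (by omega) (by omega) M' hM'
end

section
/- For n ≥ 2, the minimum size of a 2-monopoly in K_n □ K_n equals n. -/
open SimpleGraph

/-!
The diagonal `{(i, i)}` is a 2-monopoly of the rook's graph: an off-diagonal square `(a, b)`
sees `(a, a)` in its row and `(b, b)` in its column. Conversely, if a monopoly `M` has fewer
than `n` squares, some row `a` and some column `b` avoid `M`, and then `(a, b)` has no
neighbour in `M` at all.
-/

section BoxProd

variable {α β : Type*} {G : SimpleGraph α} {H : SimpleGraph β} {t : ℕ} {M : Set (α × β)}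

theorem IsMonopoly.fst_image_eq_univ_or_snd_image_eq_univ (ht : 0 < t)
    (hM : IsMonopoly (G □ H) t M) : Prod.fst '' M = Set.univ ∨ Prod.snd '' M = Set.univ := by
  by_contra! h
  obtain ⟨a, ha⟩ := (Set.ne_univ_iff_exists_notMem _).mp h.1
  obtain ⟨b, hb⟩ := (Set.ne_univ_iff_exists_notMem _).mp h.2
  have hab : (a, b) ∉ M := fun hab => ha ⟨_, hab, rfl⟩
  have hempty : (G □ H).neighborSet (a, b) ∩ M = ∅ := by
    ext ⟨x, y⟩
    simp only [Set.mem_inter_iff, mem_neighborSet, boxProd_adj, Set.mem_empty_iff_false,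
      iff_false, not_and]
    rintro (⟨-, rfl⟩ | ⟨-, rfl⟩) hxy
    · exact hb ⟨_, hxy, rfl⟩
    · exact ha ⟨_, hxy, rfl⟩
  have := hM (a, b) hab
  rw [hempty, Set.ncard_empty] at this
  omega

theorem IsMonopoly.min_card_le_ncard [Finite α] [Finite β] (ht : 0 < t)
    (hM : IsMonopoly (G □ H) t M) : min (Nat.card α) (Nat.card β) ≤ M.ncard := by
  rcases hM.fst_image_eq_univ_or_snd_image_eq_univ ht with h | h
  · calc min (Nat.card α) (Nat.card β) ≤ Nat.card α := min_le_left _ _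
      _ = (Prod.fst '' M).ncard := by rw [h, Set.ncard_univ]
      _ ≤ M.ncard := Set.ncard_image_le M.toFinite
  · calc min (Nat.card α) (Nat.card β) ≤ Nat.card β := min_le_right _ _
      _ = (Prod.snd '' M).ncard := by rw [h, Set.ncard_univ]
      _ ≤ M.ncard := Set.ncard_image_le M.toFinite

end BoxProd

theorem neighborSet_inter_diagonal {α : Type*} {a b : α} (hab : a ≠ b) :
    (completeGraph α □ completeGraph α).neighborSet (a, b) ∩ Set.diagonal α =
      {(a, a), (b, b)} := by
  ext ⟨x, y⟩
  simp only [Set.mem_inter_iff, mem_neighborSet, boxProd_adj, completeGraph_eq_top, top_adj,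
    Set.mem_diagonal_iff, Set.mem_insert_iff, Set.mem_singleton_iff, Prod.mk.injEq]
  constructor
  · rintro ⟨(⟨-, rfl⟩ | ⟨-, rfl⟩), rfl⟩ <;> simp
  · rintro (⟨rfl, rfl⟩ | ⟨rfl, rfl⟩) <;> simp [hab, hab.symm]

theorem isMonopoly_two_diagonal (α : Type*) :
    IsMonopoly (completeGraph α □ completeGraph α) 2 (Set.diagonal α) := by
  rintro ⟨a, b⟩ hab
  rw [neighborSet_inter_diagonal hab, Set.ncard_pair (by simpa using hab)]

theorem ncard_diagonal (α : Type*) : (Set.diagonal α).ncard = Nat.card α := by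
  rw [← Set.range_diag, Set.ncard_range_of_injective Function.diag_injective]

theorem mon2_rook_general (n : ℕ) :
    monNum ((completeGraph (Fin n)).boxProd (completeGraph (Fin n))) 2 = n := by
  have hdiag : n ∈ {k | ∃ M : Set (Fin n × Fin n),
      IsMonopoly (completeGraph (Fin n) □ completeGraph (Fin n)) 2 M ∧ M.ncard = k} :=
    ⟨_, isMonopoly_two_diagonal _, by rw [ncard_diagonal, Nat.card_fin]⟩
  refine le_antisymm (Nat.sInf_le hdiag) (le_csInf ⟨n, hdiag⟩ ?_)
  rintro k ⟨M, hM, rfl⟩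
  simpa using hM.min_card_le_ncard two_pos

/-- For `n ≥ 2`, `mon₂(K_n □ K_n) = n`. -/
theorem mon2_rook (n : ℕ) (hn : 2 ≤ n) :
    monNum ((completeGraph (Fin n)).boxProd (completeGraph (Fin n))) 2 = n :=
  mon2_rook_general n
end

section
/- Let t be a positive even integer and n = kt/2 for a positive integer k. Then the minimum size of a t-monopoly in K_n □ K_n equals kt²/4. -/
/-! Write `t = 2s`, so `n = ks`. If `M` is a `t`-monopoly with `m` cells and `r_i`, `c_j` are its
row and column counts, then double counting `∑_v (r_{v.1} + c_{v.2}) = 2nm` over `M` and its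
complement gives `t (n² - m) + ∑ r_i² + ∑ c_j² ≤ 2nm`, while Cauchy–Schwarz gives
`∑ r_i², ∑ c_j² ≥ m² / n`. Hence `(2m - tn)(n² - m) ≥ 0`, and `m ≥ tn / 2 = ks²` because `t ≤ 2n`.
Conversely, the `s` diagonals `{(i, i + d)}`, `d < s`, of `ℤ/n × ℤ/n` meet every row and column in
`s` cells, so they form a `2s`-monopoly with `ns = ks²` cells. -/

open SimpleGraph

open Finset

lemma monNum_eq_of_forall_le {V : Type*} {G : SimpleGraph V} {t m : ℕ}
    (hex : ∃ M : Set V, IsMonopoly G t M ∧ M.ncard = m)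
    (hle : ∀ M : Set V, IsMonopoly G t M → m ≤ M.ncard) : monNum G t = m :=
  le_antisymm (Nat.sInf_le hex) (le_csInf ⟨m, hex⟩ fun _ ⟨M, hM, hm⟩ ↦ hm ▸ hle M hM)

lemma Finset.sum_card_fiber_eq_sum_sq {ι κ : Type*} [Fintype κ] [DecidableEq κ]
    (s : Finset ι) (g : ι → κ) :
    ∑ i ∈ s, #{a ∈ s | g a = g i} = ∑ j, #{a ∈ s | g a = j} ^ 2 := by
  rw [← sum_fiberwise' s g fun j ↦ #{a ∈ s | g a = j}]
  simp only [sum_const, smul_eq_mul, sq]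

section Rook

variable {α : Type*}

lemma rook_ncard_neighborSet_inter [DecidableEq α] {M : Finset (α × α)} {v : α × α}
    (hv : v ∉ M) :
    ((⊤ □ ⊤ : SimpleGraph (α × α)).neighborSet v ∩ M).ncard
      = #{w ∈ M | w.1 = v.1} + #{w ∈ M | w.2 = v.2} := by
  have hdisj : Disjoint {w ∈ M | w.1 = v.1} {w ∈ M | w.2 = v.2} := by
    refine disjoint_filter.2 fun w hw h1 h2 ↦ hv ?_
    rwa [← Prod.ext h1 h2]
  rw [← card_union_of_disjoint hdisj, ← Set.ncard_coe_finset]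
  congr 1
  ext w
  simp only [Set.mem_inter_iff, mem_neighborSet, boxProd_adj, top_adj, coe_union,
    coe_filter, Set.mem_union, Set.mem_ofPred_eq, mem_coe]
  constructor
  · rintro ⟨⟨-, h⟩ | ⟨-, h⟩, hw⟩
    exacts [Or.inr ⟨hw, h.symm⟩, Or.inl ⟨hw, h.symm⟩]
  · rintro (⟨hw, h⟩ | ⟨hw, h⟩) <;> refine ⟨?_, hw⟩
    · exact Or.inr ⟨fun hvw ↦ hv (Prod.ext h.symm hvw ▸ hw), h.symm⟩
    · exact Or.inl ⟨fun hvw ↦ hv (Prod.ext hvw h.symm ▸ hw), h.symm⟩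

lemma rook_card_mul_le_two_mul_card [Fintype α] [DecidableEq α] {t : ℕ}
    (ht : t ≤ 2 * Fintype.card α) {M : Finset (α × α)}
    (hM : IsMonopoly (⊤ □ ⊤) t (M : Set (α × α))) :
    t * Fintype.card α ≤ 2 * #M := by
  set n := Fintype.card α with hn
  set m := #M
  set r : α → ℕ := fun i ↦ #{w ∈ M | w.1 = i}
  set c : α → ℕ := fun j ↦ #{w ∈ M | w.2 = j}
  have hr : ∑ i, r i = m := (card_eq_sum_card_fiberwise fun _ _ ↦ mem_univ _).symm
  have hc : ∑ j, c j = m := (card_eq_sum_card_fiberwise fun _ _ ↦ mem_univ _).symm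
  have hcard : m + #Mᶜ = n * n := by rw [card_add_card_compl, Fintype.card_prod]
  have htotal : ∑ v : α × α, (r v.1 + c v.2) = n * m + n * m := by
    simp only [sum_add_distrib, Fintype.sum_prod_type, sum_const, card_univ, ← hn, smul_eq_mul,
      ← mul_sum, hr, hc]
  have hin : ∑ v ∈ M, (r v.1 + c v.2) = ∑ i, r i ^ 2 + ∑ j, c j ^ 2 := by
    rw [sum_add_distrib, sum_card_fiber_eq_sum_sq, sum_card_fiber_eq_sum_sq]
  have hout : t * #Mᶜ ≤ ∑ v ∈ Mᶜ, (r v.1 + c v.2) := by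
    rw [mul_comm, ← smul_eq_mul]
    refine card_nsmul_le_sum _ _ _ fun v hv ↦ ?_
    have hvM : v ∉ M := mem_compl.1 hv
    simpa only [rook_ncard_neighborSet_inter hvM] using hM v (by exact_mod_cast hvM)
  have hr_sq : m ^ 2 ≤ n * ∑ i, r i ^ 2 := hr ▸ sq_sum_le_card_mul_sum_sq
  have hc_sq : m ^ 2 ≤ n * ∑ j, c j ^ 2 := hc ▸ sq_sum_le_card_mul_sum_sq
  have hsplit := sum_add_sum_compl M fun v : α × α ↦ r v.1 + c v.2
  rw [htotal, hin] at hsplit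
  -- Cauchy–Schwarz turns the double count into `n t (n² - m) ≤ 2 m (n² - m)`.
  have key : n * t * #Mᶜ ≤ 2 * m * #Mᶜ := by nlinarith
  rcases Nat.eq_zero_or_pos #Mᶜ with hempty | hpos
  · rw [hempty, add_zero] at hcard
    rw [hcard, ← mul_assoc]
    exact Nat.mul_le_mul_right n ht
  · rw [mul_comm t]
    exact Nat.le_of_mul_le_mul_right key hpos

end Rook

section ShiftedDiagonals

variable {G : Type*} [AddCommGroup G] [Fintype G] [DecidableEq G]

def shiftedDiagonals (S : Finset G) : Finset (G × G) := {v | v.2 - v.1 ∈ S}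

lemma card_shiftedDiagonals_filter_fst (S : Finset G) (i : G) :
    #{w ∈ shiftedDiagonals S | w.1 = i} = #S := by
  refine card_nbij' (fun w ↦ w.2 - w.1) (fun d ↦ (i, d + i)) ?_ ?_ ?_ ?_ <;>
    intro w <;> simp [shiftedDiagonals, Prod.ext_iff] <;> grind

lemma card_shiftedDiagonals_filter_snd (S : Finset G) (j : G) :
    #{w ∈ shiftedDiagonals S | w.2 = j} = #S := by
  refine card_nbij' (fun w ↦ w.2 - w.1) (fun d ↦ (j - d, j)) ?_ ?_ ?_ ?_ <;>
    intro w <;> simp [shiftedDiagonals, Prod.ext_iff] <;> grind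

lemma isMonopoly_shiftedDiagonals (S : Finset G) :
    IsMonopoly (⊤ □ ⊤) (2 * #S) (shiftedDiagonals S : Set (G × G)) := fun v hv ↦ by
  rw [rook_ncard_neighborSet_inter (mod_cast hv), card_shiftedDiagonals_filter_fst,
    card_shiftedDiagonals_filter_snd, two_mul]

lemma card_shiftedDiagonals (S : Finset G) :
    #(shiftedDiagonals S) = Fintype.card G * #S := by
  rw [card_eq_sum_card_fiberwise (f := Prod.fst) (t := univ) fun _ _ ↦ mem_univ _]
  simp only [card_shiftedDiagonals_filter_fst, sum_const, card_univ, smul_eq_mul]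

end ShiftedDiagonals

theorem monNum_rook_two_mul {G : Type*} [AddCommGroup G] [Fintype G] {s : ℕ}
    (hs : s ≤ Fintype.card G) :
    monNum (⊤ □ ⊤ : SimpleGraph (G × G)) (2 * s) = Fintype.card G * s := by
  classical
  obtain ⟨S, -, hS⟩ := exists_subset_card_eq (s := (univ : Finset G)) hs
  refine monNum_eq_of_forall_le ⟨shiftedDiagonals S, hS ▸ isMonopoly_shiftedDiagonals S, ?_⟩
    fun M hM ↦ ?_
  · rw [Set.ncard_coe_finset, card_shiftedDiagonals, hS]
  · have := rook_card_mul_le_two_mul_card (t := 2 * s) (M := M.toFinset) (by omega)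
      (by rwa [Set.coe_toFinset])
    rw [Set.ncard_eq_toFinset_card']
    linarith

/-- For even `t > 0` and `n = kt/2` with `k > 0`, `mon_t(K_n □ K_n) = kt²/4`. -/
theorem mon_rook_blocks (n k t : ℕ) (ht : Even t) (ht0 : 0 < t) (hk : 0 < k)
    (hn : n = k * t / 2) :
    monNum ((completeGraph (Fin n)).boxProd (completeGraph (Fin n))) t = k * t ^ 2 / 4 := by
  obtain ⟨s, rfl⟩ := ht
  rw [← two_mul] at hn ⊢
  have hn' : n = k * s := by rw [hn, mul_left_comm, Nat.mul_div_cancel_left _ two_pos]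
  have : NeZero n := ⟨by rw [hn']; exact (Nat.mul_pos hk (by omega)).ne'⟩
  have hs : s ≤ Fintype.card (Fin n) := by
    rw [Fintype.card_fin, hn']
    exact Nat.le_mul_of_pos_left s hk
  calc monNum _ (2 * s) = Fintype.card (Fin n) * s := monNum_rook_two_mul hs
    _ = k * (2 * s) ^ 2 / 4 := by
      rw [Fintype.card_fin, hn', show k * (2 * s) ^ 2 = 4 * (k * s * s) by ring,
        Nat.mul_div_cancel_left _ four_pos]
end

section
/- Let t be a positive even integer and n = kt/2 for a positive integer k ≥ 2. Then the minimum size of a (2n−t)-monopoly in K_n □ K_n equals k(k−1)t²/4. -/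
open SimpleGraph
open Finset

lemma nat_div_eq_iff {s x c : ℕ} (hs : 0 < s) : x / s = c ↔ c * s ≤ x ∧ x < c * s + s := by
  have e : (c + 1) * s = c * s + s := by ring
  have h1 : c ≤ x / s ↔ c * s ≤ x := Nat.le_div_iff_mul_le hs
  have h2 : x / s < c + 1 ↔ x < (c + 1) * s := Nat.div_lt_iff_lt_mul hs
  rw [e] at h2
  omega

lemma card_block {n s k : ℕ} (hs : 0 < s) (hn : n = k * s) {c : ℕ} (hc : c < k) :
    (Finset.univ.filter (fun x : Fin n => (x : ℕ) / s = c)).card = s := by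
  have h : (Finset.univ.filter (fun x : Fin n => (x : ℕ) / s = c)).card
      = (Finset.Ico (c * s) (c * s + s)).card := by
    apply Finset.card_nbij (fun x : Fin n => (x : ℕ))
    · intro a ha
      simp only [Finset.mem_coe, mem_filter, mem_univ, true_and] at ha
      rw [nat_div_eq_iff hs] at ha
      simp only [Finset.mem_coe, Finset.mem_Ico]
      omega
    · intro a _ b _ hab
      exact Fin.val_injective hab
    · intro m hm
      simp only [Finset.coe_Ico, Set.mem_Ico] at hm
      have hmn : m < n := by
        have : (c + 1) * s ≤ k * s := Nat.mul_le_mul_right s hc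
        have e : (c + 1) * s = c * s + s := by ring
        omega
      refine ⟨⟨m, hmn⟩, ?_, rfl⟩
      simp only [Finset.coe_filter, Set.mem_setOf_eq, mem_univ, true_and]
      rw [nat_div_eq_iff hs]
      omega
  rw [h, Nat.card_Ico]
  omega

lemma row_col_count {n : ℕ} (T : Finset (Fin n × Fin n)) (v : Fin n × Fin n) (hv : v ∈ T)
    [DecidablePred (((completeGraph (Fin n)).boxProd (completeGraph (Fin n))).Adj v)] :
    (T.filter (fun w => w.1 = v.1)).card + (T.filter (fun w => w.2 = v.2)).card
      = (T.filter (((completeGraph (Fin n)).boxProd (completeGraph (Fin n))).Adj v)).card + 2 := by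
  classical
  set row := T.filter (fun w => w.1 = v.1) with hrow
  set col := T.filter (fun w => w.2 = v.2) with hcol
  have hinter : row ∩ col = {v} := by
    ext w
    simp only [hrow, hcol, Finset.mem_inter, Finset.mem_filter, Finset.mem_singleton]
    constructor
    · rintro ⟨⟨_, h1⟩, ⟨_, h2⟩⟩
      exact Prod.ext h1 h2
    · rintro rfl
      exact ⟨⟨hv, rfl⟩, ⟨hv, rfl⟩⟩
  have hadj : ∀ w, (((completeGraph (Fin n)).boxProd (completeGraph (Fin n))).Adj v w)
      ↔ ((v.1 ≠ w.1 ∧ v.2 = w.2) ∨ (v.2 ≠ w.2 ∧ v.1 = w.1)) := by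
    intro w
    rw [SimpleGraph.boxProd_adj]
    simp [completeGraph]
  have hunion : row ∪ col
      = insert v (T.filter (((completeGraph (Fin n)).boxProd (completeGraph (Fin n))).Adj v)) := by
    ext w
    simp only [hrow, hcol, Finset.mem_union, Finset.mem_filter, Finset.mem_insert, hadj]
    constructor
    · rintro (⟨hT, h1⟩ | ⟨hT, h2⟩)
      · by_cases hb : w.2 = v.2
        · exact Or.inl (Prod.ext h1 hb)
        · exact Or.inr ⟨hT, Or.inr ⟨fun h => hb h.symm, h1.symm⟩⟩
      · by_cases ha : w.1 = v.1
        · exact Or.inl (Prod.ext ha h2)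
        · exact Or.inr ⟨hT, Or.inl ⟨fun h => ha h.symm, h2.symm⟩⟩
    · rintro (rfl | ⟨hT, (⟨_, h⟩ | ⟨_, h⟩)⟩)
      · exact Or.inl ⟨hv, rfl⟩
      · exact Or.inr ⟨hT, h.symm⟩
      · exact Or.inl ⟨hT, h.symm⟩
  have hv_not : v ∉ T.filter (((completeGraph (Fin n)).boxProd (completeGraph (Fin n))).Adj v) := by
    simp only [Finset.mem_filter]
    rintro ⟨_, h⟩
    exact ((completeGraph (Fin n)).boxProd (completeGraph (Fin n))).irrefl h
  have := Finset.card_union_add_card_inter row col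
  rw [hinter, hunion, Finset.card_insert_of_notMem hv_not, Finset.card_singleton] at this
  omega

lemma row_univ_card {n : ℕ} (v : Fin n × Fin n) :
    (Finset.univ.filter (fun w : Fin n × Fin n => w.1 = v.1)).card = n := by
  have : Finset.univ.filter (fun w : Fin n × Fin n => w.1 = v.1)
      = {v.1} ×ˢ Finset.univ := by
    ext w
    simp only [Finset.mem_filter, Finset.mem_univ, true_and, Finset.mem_product,
      Finset.mem_singleton, and_true]
  rw [this, Finset.card_product]
  simp

lemma col_univ_card {n : ℕ} (v : Fin n × Fin n) :
    (Finset.univ.filter (fun w : Fin n × Fin n => w.2 = v.2)).card = n := by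
  have : Finset.univ.filter (fun w : Fin n × Fin n => w.2 = v.2)
      = Finset.univ ×ˢ {v.2} := by
    ext w
    simp only [Finset.mem_filter, Finset.mem_univ, true_and, Finset.mem_product,
      Finset.mem_singleton, and_true]
  rw [this, Finset.card_product]
  simp

lemma nbhd_card {n : ℕ} (v : Fin n × Fin n)
    [DecidablePred (((completeGraph (Fin n)).boxProd (completeGraph (Fin n))).Adj v)] :
    (Finset.univ.filter (((completeGraph (Fin n)).boxProd (completeGraph (Fin n))).Adj v)).card + 2
      = n + n := by
  rw [← row_col_count Finset.univ v (Finset.mem_univ v), row_univ_card, col_univ_card]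

lemma lower_bound_s9 {n s : ℕ} (T : Finset (Fin n × Fin n))
    (hT : ∀ v ∈ T, (T.filter (fun w => w.1 = v.1)).card
        + (T.filter (fun w => w.2 = v.2)).card ≤ 2 * s) :
    T.card ≤ s * n := by
  classical
  set r : Fin n → ℕ := fun i => (T.filter (fun w => w.1 = i)).card with hr
  set c : Fin n → ℕ := fun j => (T.filter (fun w => w.2 = j)).card with hc
  have hsumr : ∑ i, r i = T.card :=
    (Finset.card_eq_sum_card_fiberwise (fun x _ => Finset.mem_univ x.1)).symm
  have hsumc : ∑ j, c j = T.card :=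
    (Finset.card_eq_sum_card_fiberwise (fun x _ => Finset.mem_univ x.2)).symm
  have hsq_r : ∑ v ∈ T, r v.1 = ∑ i, (r i) ^ 2 := by
    rw [← Finset.sum_fiberwise' T Prod.fst r]
    refine Finset.sum_congr rfl fun i _ => ?_
    rw [Finset.sum_const, smul_eq_mul, sq]
  have hsq_c : ∑ v ∈ T, c v.2 = ∑ j, (c j) ^ 2 := by
    rw [← Finset.sum_fiberwise' T Prod.snd c]
    refine Finset.sum_congr rfl fun j _ => ?_
    rw [Finset.sum_const, smul_eq_mul, sq]
  have cs_r : T.card ^ 2 ≤ n * ∑ i, (r i) ^ 2 := by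
    have := sq_sum_le_card_mul_sum_sq (s := (Finset.univ : Finset (Fin n))) (f := r)
    simpa [hsumr] using this
  have cs_c : T.card ^ 2 ≤ n * ∑ j, (c j) ^ 2 := by
    have := sq_sum_le_card_mul_sum_sq (s := (Finset.univ : Finset (Fin n))) (f := c)
    simpa [hsumc] using this
  have hbound : ∑ v ∈ T, (r v.1 + c v.2) ≤ T.card * (2 * s) := by
    have := Finset.sum_le_card_nsmul T (fun v => r v.1 + c v.2) (2 * s) (fun v hv => hT v hv)
    simpa using this
  have key : 2 * T.card ^ 2 ≤ n * (T.card * (2 * s)) := by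
    calc 2 * T.card ^ 2 = T.card ^ 2 + T.card ^ 2 := by ring
    _ ≤ n * ∑ i, (r i) ^ 2 + n * ∑ j, (c j) ^ 2 := Nat.add_le_add cs_r cs_c
    _ = n * (∑ v ∈ T, (r v.1 + c v.2)) := by rw [Finset.sum_add_distrib, hsq_r, hsq_c]; ring
    _ ≤ n * (T.card * (2 * s)) := Nat.mul_le_mul_left n hbound
  rcases Nat.eq_zero_or_pos T.card with h0 | h0
  · omega
  · have h2 : T.card * (2 * T.card) ≤ T.card * (2 * (s * n)) := by
      calc T.card * (2 * T.card) = 2 * T.card ^ 2 := by ring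
      _ ≤ n * (T.card * (2 * s)) := key
      _ = T.card * (2 * (s * n)) := by ring
    have := Nat.le_of_mul_le_mul_left h2 h0
    omega

lemma filter_split {V : Type*} [Fintype V] [DecidableEq V] (T : Finset V) (p : V → Prop)
    [DecidablePred p] :
    (T.filter p).card + (Tᶜ.filter p).card = (Finset.univ.filter p).card := by
  rw [← Finset.card_union_of_disjoint
      (Finset.disjoint_filter_filter disjoint_compl_right), ← Finset.filter_union,
      Finset.union_compl]

/-- For even `t > 0` and `n = kt/2` with `k ≥ 2`, `mon_{2n−t}(K_n □ K_n) = k(k−1)t²/4`. -/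
theorem mon_rook_complement (n k t : ℕ) (ht : Even t) (ht0 : 0 < t) (hk : 2 ≤ k)
    (hn : n = k * t / 2) :
    monNum ((completeGraph (Fin n)).boxProd (completeGraph (Fin n))) (2 * n - t)
      = k * (k - 1) * t ^ 2 / 4 := by
  classical
  obtain ⟨s, hts⟩ : ∃ s, t = 2 * s := by
    obtain ⟨u, hu⟩ := ht; exact ⟨u, by omega⟩
  have hs0 : 0 < s := by omega
  have hns : n = k * s := by
    rw [hn, hts, show k * (2 * s) = k * s * 2 by ring, Nat.mul_div_cancel _ (by norm_num)]
  subst hts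
  obtain ⟨m, rfl⟩ : ∃ m, k = m + 2 := ⟨k - 2, by omega⟩
  subst hns
  set n := (m + 2) * s with hndef
  have hgoal : (m + 2) * (m + 2 - 1) * (2 * s) ^ 2 / 4 = n ^ 2 - s * n := by
    have h1 : m + 2 - 1 = m + 1 := rfl
    have h2 : (m + 2) * (m + 1) * (2 * s) ^ 2 = ((m + 2) * (m + 1) * s ^ 2) * 4 := by ring
    have h3 : n ^ 2 - s * n = (m + 2) * (m + 1) * s ^ 2 := by
      apply Nat.sub_eq_of_eq_add
      rw [hndef]; ring
    rw [h1, h2, Nat.mul_div_cancel _ (by norm_num), h3]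
  rw [hgoal]
  have hnn : n ^ 2 = n * n := sq n
  have hsn : s * n = n * s := Nat.mul_comm s n
  have h2sn : 2 * s ≤ n := by
    have := Nat.mul_le_mul_right s (show 2 ≤ m + 2 by omega)
    omega
  -- bridge between set-ncard and finset cards
  have bridge : ∀ (M : Set (Fin n × Fin n)) (v : Fin n × Fin n),
      (((completeGraph (Fin n)).boxProd (completeGraph (Fin n))).neighborSet v ∩ M).ncard
      = ((M.toFinite.toFinset).filter (((completeGraph (Fin n)).boxProd (completeGraph (Fin n))).Adj v)).card := by
    intro M v
    rw [Set.ncard_eq_toFinset_card _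
      ((((completeGraph (Fin n)).boxProd (completeGraph (Fin n))).neighborSet v ∩ M).toFinite)]
    congr 1
    ext w
    simp only [Set.Finite.mem_toFinset, Set.mem_inter_iff, SimpleGraph.mem_neighborSet,
      Finset.mem_filter]
    tauto
  -- the candidate monopoly
  set T₀ : Finset (Fin n × Fin n) :=
    Finset.univ.filter (fun v : Fin n × Fin n => ((v.1 : ℕ)) / s = ((v.2 : ℕ)) / s) with hT₀
  have hrow₀ : ∀ i : Fin n, (T₀.filter (fun w => w.1 = i)).card = s := by
    intro i
    have hc : (i : ℕ) / s < m + 2 := by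
      rw [Nat.div_lt_iff_lt_mul hs0]
      exact i.2
    have heq : T₀.filter (fun w => w.1 = i)
        = {i} ×ˢ (Finset.univ.filter (fun b : Fin n => (b : ℕ) / s = (i : ℕ) / s)) := by
      ext w
      simp only [hT₀, Finset.mem_filter, Finset.mem_univ, true_and, Finset.mem_product,
        Finset.mem_singleton]
      constructor
      · rintro ⟨hd, rfl⟩; exact ⟨rfl, hd.symm⟩
      · rintro ⟨rfl, hd⟩; exact ⟨hd.symm, rfl⟩
    rw [heq, Finset.card_product, Finset.card_singleton, one_mul]
    exact card_block hs0 rfl hc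
  have hcol₀ : ∀ j : Fin n, (T₀.filter (fun w => w.2 = j)).card = s := by
    intro j
    have hc : (j : ℕ) / s < m + 2 := by
      rw [Nat.div_lt_iff_lt_mul hs0]
      exact j.2
    have heq : T₀.filter (fun w => w.2 = j)
        = (Finset.univ.filter (fun a : Fin n => (a : ℕ) / s = (j : ℕ) / s)) ×ˢ {j} := by
      ext w
      simp only [hT₀, Finset.mem_filter, Finset.mem_univ, true_and, Finset.mem_product,
        Finset.mem_singleton]
      constructor
      · rintro ⟨hd, rfl⟩; exact ⟨hd, rfl⟩
      · rintro ⟨hd, rfl⟩; exact ⟨hd, rfl⟩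
    rw [heq, Finset.card_product, Finset.card_singleton, mul_one]
    exact card_block hs0 rfl hc
  have hT₀card : T₀.card = n * s := by
    rw [Finset.card_eq_sum_card_fiberwise (f := Prod.fst) (t := Finset.univ)
      (fun x _ => Finset.mem_univ x.1)]
    rw [Finset.sum_congr rfl (fun i _ => hrow₀ i), Finset.sum_const, Finset.card_univ]
    simp [mul_comm]
  set Mset : Set (Fin n × Fin n) :=
    {v : Fin n × Fin n | ¬ ((v.1 : ℕ)) / s = ((v.2 : ℕ)) / s} with hMset
  have hMfin : Mset.toFinite.toFinset = T₀ᶜ := by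
    ext w
    simp [hMset, hT₀, Set.Finite.mem_toFinset]
  have hmem : (n ^ 2 - s * n) ∈
      {c | ∃ M : Set (Fin n × Fin n), IsMonopoly ((completeGraph (Fin n)).boxProd (completeGraph (Fin n))) (2 * n - 2 * s) M ∧ M.ncard = c} := by
    refine ⟨Mset, ?_, ?_⟩
    · intro v hv
      have hvT : v ∈ T₀ := by
        simp only [hMset, Set.mem_setOf_eq, not_not] at hv
        simp [hT₀, hv]
      rw [bridge, hMfin]
      have hrc := row_col_count T₀ v hvT
      rw [hrow₀ v.1, hcol₀ v.2] at hrc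
      have hsplit := filter_split T₀ (((completeGraph (Fin n)).boxProd (completeGraph (Fin n))).Adj v)
      have htot := nbhd_card (n := n) v
      omega
    · rw [Set.ncard_eq_toFinset_card _ Mset.toFinite, hMfin, Finset.card_compl, hT₀card]
      simp only [Fintype.card_prod, Fintype.card_fin]
      omega
  have hlow : ∀ c ∈ {c | ∃ M : Set (Fin n × Fin n),
      IsMonopoly ((completeGraph (Fin n)).boxProd (completeGraph (Fin n))) (2 * n - 2 * s) M ∧ M.ncard = c}, n ^ 2 - s * n ≤ c := by
    rintro c ⟨M, hM, rfl⟩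
    set F := M.toFinite.toFinset with hF
    set T := Fᶜ with hT
    have hFT : F = Tᶜ := by rw [hT, compl_compl]
    have hTbound : T.card ≤ s * n := by
      apply lower_bound_s9
      intro v hvT
      have hvM : v ∉ M := by
        intro hvM
        have hvF : v ∈ F := (Set.Finite.mem_toFinset _).2 hvM
        rw [hT, Finset.mem_compl] at hvT
        exact hvT hvF
      have hmono := hM v hvM
      rw [bridge] at hmono
      have hrc := row_col_count T v hvT
      have hsplit := filter_split T (((completeGraph (Fin n)).boxProd (completeGraph (Fin n))).Adj v)
      have htot := nbhd_card (n := n) v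
      rw [← hF, hFT] at hmono
      omega
    have hMcard : M.ncard = n * n - T.card := by
      rw [Set.ncard_eq_toFinset_card _ M.toFinite, ← hF, hFT, Finset.card_compl]
      simp only [Fintype.card_prod, Fintype.card_fin]
    omega
  exact le_antisymm (Nat.sInf_le hmem) (le_csInf ⟨_, hmem⟩ hlow)
end

section
/- Let G be a k-regular graph on n vertices, and let L(G) be its line graph. Any simple-majority monopoly of L(G) (where each vertex e of L(G) has threshold d_{L(G)}(e)/2 = k−1) has cardinality at least n(k−1)/4. -/
open SimpleGraph

/-!
Let `d v` be the number of monopoly edges at `v`, so `k - d v` edges at `v` lie outside the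
monopoly. An edge `uv` outside the monopoly has at most `d u + d v` neighbours in it, so summing
the threshold over such edges and double counting gives
`(k - 1) ∑ (k - d v) ≤ 2 ∑ d v (k - d v)`. Completing the square in `d v` turns this into
`n (k - 1) ≤ 2 ∑ d v = 4 |M|`.
-/

open Finset

theorem Finset.card_mul_sub_one_le_two_mul_sum {ι R : Type*} [CommRing R] [LinearOrder R]
    [IsStrictOrderedRing R] (s : Finset ι) (x : ι → R) {k : R} (hk : 0 < k + 1)
    (h : (k - 1) * ∑ i ∈ s, (k - x i) ≤ 2 * ∑ i ∈ s, x i * (k - x i)) :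
    #s * (k - 1) ≤ 2 * ∑ i ∈ s, x i := by
  set g : ι → R := fun i ↦ 2 * x i - (k - 1)
  -- `(k + 1) g - 2 (k - x) g = g²`, while `h` says exactly that `∑ 2 (k - x) g ≥ 0`.
  have hpoint : ∀ i ∈ s, 2 * (k - x i) * g i ≤ (k + 1) * g i := fun i _ ↦ by
    nlinarith [sq_nonneg (g i)]
  have hsum : 0 ≤ ∑ i ∈ s, 2 * (k - x i) * g i := by
    have : ∑ i ∈ s, 2 * (k - x i) * g i
        = 2 * (2 * ∑ i ∈ s, x i * (k - x i) - (k - 1) * ∑ i ∈ s, (k - x i)) := by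
      simp only [g, mul_sum, ← sum_sub_distrib]
      exact sum_congr rfl fun i _ ↦ by ring
    rw [this]
    linarith
  have hg : 0 ≤ ∑ i ∈ s, g i :=
    nonneg_of_mul_nonneg_right (mul_sum s g (k + 1) ▸ hsum.trans (sum_le_sum hpoint)) hk
  simp only [g, sum_sub_distrib, ← mul_sum, sum_const, nsmul_eq_mul] at hg
  linarith

namespace SimpleGraph

variable {V : Type*} [Fintype V] [DecidableEq V] {G : SimpleGraph V}

def edgeDegree (s : Finset G.edgeSet) (v : V) : ℕ :=
  #(s.filter fun e : G.edgeSet ↦ v ∈ (e : Sym2 V))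

theorem sum_filter_mem_edge_eq_add {β : Type*} [AddCommMonoid β] (w : V → β) {e : G.edgeSet}
    {a b : V} (he : (e : Sym2 V) = s(a, b)) :
    ∑ v with v ∈ (e : Sym2 V), w v = w a + w b := by
  have hab : a ≠ b := (G.mem_edgeSet.mp (he ▸ e.2)).ne
  rw [show ({v | v ∈ (e : Sym2 V)} : Finset V) = {a, b} by ext; simp [he], sum_pair hab]

theorem sum_nsmul_edgeDegree {β : Type*} [AddCommMonoid β] (s : Finset G.edgeSet) (w : V → β) :
    ∑ v, edgeDegree s v • w v = ∑ e ∈ s, ∑ v with v ∈ (e : Sym2 V), w v := by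
  simp only [edgeDegree, card_eq_sum_ones, sum_smul, sum_filter, ite_smul, one_smul, zero_smul]
  exact sum_comm

theorem sum_edgeDegree (s : Finset G.edgeSet) : ∑ v, edgeDegree s v = 2 * #s := by
  have := sum_nsmul_edgeDegree s (fun _ ↦ (1 : ℕ))
  simp only [smul_eq_mul, mul_one] at this
  rw [this, sum_congr rfl fun e _ ↦ ?_, sum_const, smul_eq_mul, mul_comm]
  induction e using Subtype.rec with | _ e _ => ?_
  induction e using Sym2.ind with | _ a b => exact sum_filter_mem_edge_eq_add (G := G) _ rfl

theorem IsMonopoly.le_edgeDegree_add {t : ℕ} {s : Finset G.edgeSet}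
    (hs : IsMonopoly G.lineGraph t ↑s) {e : G.edgeSet} (he : e ∉ s) {a b : V}
    (hab : (e : Sym2 V) = s(a, b)) : t ≤ edgeDegree s a + edgeDegree s b := by
  have hsub : G.lineGraph.neighborSet e ∩ ↑s ⊆
      ↑((s.filter fun f : G.edgeSet ↦ a ∈ (f : Sym2 V)) ∪
        s.filter fun f ↦ b ∈ (f : Sym2 V)) := by
    rintro f ⟨hef, hf⟩
    obtain ⟨-, v, hve, hvf⟩ := lineGraph_adj_iff_exists.mp hef
    rw [hab, Sym2.mem_iff] at hve
    rcases hve with rfl | rfl <;> simp [mem_coe.mp hf, hvf]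
  calc t ≤ (G.lineGraph.neighborSet e ∩ ↑s).ncard := hs e he
    _ ≤ #((s.filter fun f : G.edgeSet ↦ a ∈ (f : Sym2 V)) ∪
          s.filter fun f ↦ b ∈ (f : Sym2 V)) :=
      Set.ncard_coe_finset _ ▸ Set.ncard_le_ncard hsub (Set.toFinite _)
    _ ≤ edgeDegree s a + edgeDegree s b := card_union_le _ _

variable [DecidableRel G.Adj]

theorem edgeDegree_add_edgeDegree_compl (s : Finset G.edgeSet) (v : V) :
    edgeDegree s v + edgeDegree sᶜ v = G.degree v := by
  rw [edgeDegree, edgeDegree,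
    ← card_union_of_disjoint (disjoint_filter_filter disjoint_compl_right), ← filter_union, union_compl, ← card_incidenceFinset_eq_degree,
    ← card_map (Function.Embedding.subtype _)]
  congr 1
  ext e
  simp [incidenceSet, and_comm]

theorem IsMonopoly.mul_card_compl_le_sum_edgeDegree_mul {t : ℕ} {s : Finset G.edgeSet}
    (hs : IsMonopoly G.lineGraph t ↑s) :
    t * #sᶜ ≤ ∑ v, edgeDegree s v * edgeDegree sᶜ v := by
  simp only [mul_comm (edgeDegree s _), ← smul_eq_mul, sum_nsmul_edgeDegree]
  rw [smul_eq_mul, mul_comm]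
  refine card_nsmul_le_sum _ _ _ fun e he ↦ ?_
  induction e using Subtype.rec with | _ e _ => ?_
  induction e using Sym2.ind with
  | _ a b => rw [sum_filter_mem_edge_eq_add _ rfl]; exact hs.le_edgeDegree_add (mem_compl.mp he) rfl

end SimpleGraph

/-- For a `k`-regular graph `G` on `n` vertices, any simple-majority monopoly of the line
graph `L(G)` (threshold `k − 1` at every vertex) has cardinality at least `n(k−1)/4`. -/
theorem lineGraph_majority_monopoly_lower {V : Type*} [Fintype V] (G : SimpleGraph V) [DecidableRel G.Adj]
    (n k : ℕ) (hn : Fintype.card V = n) (hreg : G.IsRegularOfDegree k)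
    (M : Set G.edgeSet) (hM : IsMonopoly (lineGraph G) (k - 1) M) :
    n * (k - 1) ≤ 4 * M.ncard := by
  classical
  obtain ⟨s, rfl⟩ := M.toFinite.exists_finset_coe
  obtain rfl | hk := Nat.eq_zero_or_pos k
  · simp
  have hcompl (v : V) : (edgeDegree sᶜ v : ℤ) = k - edgeDegree s v := by
    have := edgeDegree_add_edgeDegree_compl s v
    rw [hreg v] at this
    omega
  have hcount := hM.mul_card_compl_le_sum_edgeDegree_mul
  have hcompl_sum := sum_edgeDegree sᶜ
  have key := card_mul_sub_one_le_two_mul_sum univ (fun v ↦ (edgeDegree s v : ℤ)) (k := k)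
    (by positivity) ?_
  · rw [card_univ, hn, ← Nat.cast_sum, sum_edgeDegree] at key
    push_cast at key
    rw [Set.ncard_coe_finset]
    zify [hk]
    linarith
  · simp only [← hcompl]
    zify [hk] at hcount hcompl_sum
    rw [hcompl_sum]
    linarith
end

section
/- For odd n ≥ 3, the minimum size of an (n−1)-monopoly in K_n □ K_n equals n(n−1)/2. -/
open SimpleGraph

namespace MonRookAux

open Finset

variable {n m : ℕ}

/-- number of elements of `F` in row `i` -/
def rowC (F : Finset (Fin n × Fin n)) (i : Fin n) : ℕ := (F.filter (fun p => p.1 = i)).card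

/-- number of elements of `F` in column `j` -/
def colC (F : Finset (Fin n × Fin n)) (j : Fin n) : ℕ := (F.filter (fun p => p.2 = j)).card

lemma card_row_fiber (i : Fin n) :
    ((Finset.univ : Finset (Fin n × Fin n)).filter (fun p => p.1 = i)).card = n := by
  have h : ((Finset.univ : Finset (Fin n × Fin n)).filter (fun p => p.1 = i))
      = {i} ×ˢ Finset.univ := by
    ext p
    simp only [Finset.mem_filter, Finset.mem_univ, true_and, Finset.mem_product,
      Finset.mem_singleton, and_true]
  rw [h]
  simp

lemma card_col_fiber (j : Fin n) :
    ((Finset.univ : Finset (Fin n × Fin n)).filter (fun p => p.2 = j)).card = n := by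
  have h : ((Finset.univ : Finset (Fin n × Fin n)).filter (fun p => p.2 = j))
      = Finset.univ ×ˢ {j} := by
    ext p
    simp only [Finset.mem_filter, Finset.mem_univ, true_and, Finset.mem_product,
      Finset.mem_singleton]
  rw [h]
  simp

lemma rowC_le (F : Finset (Fin n × Fin n)) (i : Fin n) : rowC F i ≤ n :=
  le_trans (Finset.card_le_card (Finset.filter_subset_filter _ (Finset.subset_univ F)))
    (le_of_eq (card_row_fiber i))

lemma colC_le (F : Finset (Fin n × Fin n)) (j : Fin n) : colC F j ≤ n :=
  le_trans (Finset.card_le_card (Finset.filter_subset_filter _ (Finset.subset_univ F)))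
    (le_of_eq (card_col_fiber j))

lemma sum_rowC (F : Finset (Fin n × Fin n)) : ∑ i, rowC F i = F.card :=
  (Finset.card_eq_sum_card_fiberwise (fun p _ => Finset.mem_univ p.1)).symm

lemma sum_colC (F : Finset (Fin n × Fin n)) : ∑ j, colC F j = F.card :=
  (Finset.card_eq_sum_card_fiberwise (fun p _ => Finset.mem_univ p.2)).symm

/-- neighbor count in the rook graph equals row count plus column count -/
lemma ncount (F : Finset (Fin n × Fin n)) (v : Fin n × Fin n) (hv : v ∉ F) :
    ((((completeGraph (Fin n)).boxProd (completeGraph (Fin n))).neighborSet v)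
      ∩ (↑F : Set (Fin n × Fin n))).ncard = rowC F v.1 + colC F v.2 := by
  classical
  have hfin : ((((completeGraph (Fin n)).boxProd (completeGraph (Fin n))).neighborSet v)
      ∩ (↑F : Set (Fin n × Fin n))).Finite := Set.toFinite _
  rw [Set.ncard_eq_toFinset_card _ hfin]
  have hset : hfin.toFinset
      = F.filter (fun p => (¬ v.1 = p.1 ∧ v.2 = p.2) ∨ (¬ v.2 = p.2 ∧ v.1 = p.1)) := by
    ext p
    simp only [Set.Finite.mem_toFinset, Set.mem_inter_iff, SimpleGraph.mem_neighborSet,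
      SimpleGraph.boxProd_adj, completeGraph_eq_top, SimpleGraph.top_adj,
      Finset.mem_coe, Finset.mem_filter, ne_eq]
    tauto
  rw [hset, Finset.filter_or, Finset.card_union_of_disjoint]
  · have e1 : F.filter (fun p => ¬ v.1 = p.1 ∧ v.2 = p.2) = F.filter (fun p => p.2 = v.2) := by
      ext p
      simp only [Finset.mem_filter]
      constructor
      · rintro ⟨h1, _, h3⟩
        exact ⟨h1, h3.symm⟩
      · rintro ⟨h1, h2⟩
        refine ⟨h1, fun h3 => hv ?_, h2.symm⟩
        have : v = p := Prod.ext h3 h2.symm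
        rwa [this]
    have e2 : F.filter (fun p => ¬ v.2 = p.2 ∧ v.1 = p.1) = F.filter (fun p => p.1 = v.1) := by
      ext p
      simp only [Finset.mem_filter]
      constructor
      · rintro ⟨h1, _, h3⟩
        exact ⟨h1, h3.symm⟩
      · rintro ⟨h1, h2⟩
        refine ⟨h1, fun h3 => hv ?_, h2.symm⟩
        have : v = p := Prod.ext h2.symm h3
        rwa [this]
    rw [e1, e2, add_comm]
    rfl
  · rw [Finset.disjoint_filter]
    rintro p _ ⟨h1, h2⟩ ⟨h3, _⟩
    exact h3 h2

/-- abstract integer arithmetic step -/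
lemma arith_step (a s A B P Q : ℤ) (h1 : (a - 1) * (a ^ 2 - s) ≤ A + B)
    (h2 : A + P = a * s) (h3 : B + Q = a * s)
    (h4 : s ^ 2 ≤ a * P) (h5 : s ^ 2 ≤ a * Q)
    (ha : 0 ≤ a) (hpos : 0 < a ^ 2 - s) : a * (a - 1) ≤ 2 * s := by
  have key : 0 ≤ (2 * s - a * (a - 1)) * (a ^ 2 - s) := by
    nlinarith [mul_le_mul_of_nonneg_left h1 ha, h4, h5, h2, h3]
  nlinarith [key, hpos]

/-- The key lower bound via double counting and Cauchy–Schwarz. -/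
lemma lower_bound (hn : 3 ≤ n) (F : Finset (Fin n × Fin n))
    (h : ∀ p : Fin n × Fin n, p ∉ F → n - 1 ≤ rowC F p.1 + colC F p.2) :
    n * (n - 1) / 2 ≤ F.card := by
  classical
  set S := F.card with hS
  have h1n : 1 ≤ n := by omega
  have hSle : S ≤ n ^ 2 := by
    have := Finset.card_le_card (Finset.subset_univ F)
    simpa [sq, Fintype.card_prod] using this
  by_cases hcase : n ^ 2 ≤ S
  · calc n * (n - 1) / 2 ≤ n * n / 2 := by
          exact Nat.div_le_div_right (Nat.mul_le_mul_left n (Nat.sub_le n 1))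
      _ ≤ n ^ 2 := by rw [sq]; exact Nat.div_le_self _ _
      _ ≤ S := hcase
  push_neg at hcase
  -- T : complement
  set T := (Finset.univ : Finset (Fin n × Fin n)) \ F with hT
  have hTcard : T.card = n ^ 2 - S := by
    rw [hT, Finset.card_sdiff_of_subset (Finset.subset_univ F)]
    simp [sq, Fintype.card_prod, hS]
  -- fiber sizes of T
  have hTfiber_row : ∀ i, (T.filter (fun p => p.1 = i)).card = n - rowC F i := by
    intro i
    have hsub : F.filter (fun p => p.1 = i) ⊆
        (Finset.univ : Finset (Fin n × Fin n)).filter (fun p => p.1 = i) :=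
      Finset.filter_subset_filter _ (Finset.subset_univ F)
    have heq : T.filter (fun p => p.1 = i)
        = (Finset.univ : Finset (Fin n × Fin n)).filter (fun p => p.1 = i)
          \ F.filter (fun p => p.1 = i) := by
      ext p; simp only [hT, Finset.mem_sdiff, Finset.mem_filter, Finset.mem_univ, true_and]
      tauto
    rw [heq, Finset.card_sdiff_of_subset hsub, card_row_fiber]
    rfl
  have hTfiber_col : ∀ j, (T.filter (fun p => p.2 = j)).card = n - colC F j := by
    intro j
    have hsub : F.filter (fun p => p.2 = j) ⊆
        (Finset.univ : Finset (Fin n × Fin n)).filter (fun p => p.2 = j) :=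
      Finset.filter_subset_filter _ (Finset.subset_univ F)
    have heq : T.filter (fun p => p.2 = j)
        = (Finset.univ : Finset (Fin n × Fin n)).filter (fun p => p.2 = j)
          \ F.filter (fun p => p.2 = j) := by
      ext p; simp only [hT, Finset.mem_sdiff, Finset.mem_filter, Finset.mem_univ, true_and]
      tauto
    rw [heq, Finset.card_sdiff_of_subset hsub, card_col_fiber]
    rfl
  -- double counting identity
  have hsum_row : ∑ p ∈ T, rowC F p.1 = ∑ i, (n - rowC F i) * rowC F i := by
    have hfib := Finset.sum_fiberwise_of_maps_to (s := T)
      (t := (Finset.univ : Finset (Fin n))) (g := fun p : Fin n × Fin n => p.1)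
      (fun p _ => Finset.mem_univ p.1) (fun p => rowC F p.1)
    rw [← hfib]
    refine Finset.sum_congr rfl (fun i _ => ?_)
    rw [Finset.sum_congr rfl (fun p hp => ?_), Finset.sum_const, smul_eq_mul, hTfiber_row]
    · rw [Finset.mem_filter] at hp
      rw [hp.2]
  have hsum_col : ∑ p ∈ T, colC F p.2 = ∑ j, (n - colC F j) * colC F j := by
    have hfib := Finset.sum_fiberwise_of_maps_to (s := T)
      (t := (Finset.univ : Finset (Fin n))) (g := fun p : Fin n × Fin n => p.2)
      (fun p _ => Finset.mem_univ p.2) (fun p => colC F p.2)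
    rw [← hfib]
    refine Finset.sum_congr rfl (fun j _ => ?_)
    rw [Finset.sum_congr rfl (fun p hp => ?_), Finset.sum_const, smul_eq_mul, hTfiber_col]
    · rw [Finset.mem_filter] at hp
      rw [hp.2]
  -- main counting inequality in ℕ
  have hmain : (n - 1) * (n ^ 2 - S)
      ≤ (∑ i, (n - rowC F i) * rowC F i) + ∑ j, (n - colC F j) * colC F j := by
    rw [← hsum_row, ← hsum_col, ← Finset.sum_add_distrib]
    calc (n - 1) * (n ^ 2 - S) = ∑ _p ∈ T, (n - 1) := by
          rw [Finset.sum_const, smul_eq_mul, hTcard, mul_comm]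
      _ ≤ ∑ p ∈ T, (rowC F p.1 + colC F p.2) := by
          refine Finset.sum_le_sum (fun p hp => ?_)
          rw [hT, Finset.mem_sdiff] at hp
          exact h p hp.2
  -- the algebraic identities
  have hAsum : (∑ i, (n - rowC F i) * rowC F i) + (∑ i, rowC F i ^ 2) = n * S := by
    rw [← Finset.sum_add_distrib]
    have hterm : ∀ i ∈ (Finset.univ : Finset (Fin n)),
        (n - rowC F i) * rowC F i + rowC F i ^ 2 = n * rowC F i := by
      intro i _
      rw [sq, ← add_mul, Nat.sub_add_cancel (rowC_le F i)]
    rw [Finset.sum_congr rfl hterm, ← Finset.mul_sum, sum_rowC]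
  have hBsum : (∑ j, (n - colC F j) * colC F j) + (∑ j, colC F j ^ 2) = n * S := by
    rw [← Finset.sum_add_distrib]
    have hterm : ∀ j ∈ (Finset.univ : Finset (Fin n)),
        (n - colC F j) * colC F j + colC F j ^ 2 = n * colC F j := by
      intro j _
      rw [sq, ← add_mul, Nat.sub_add_cancel (colC_le F j)]
    rw [Finset.sum_congr rfl hterm, ← Finset.mul_sum, sum_colC]
  -- sums of row/col counts, cast to ℤ
  have hRsum : ∑ i, ((rowC F i : ℤ)) = (S : ℤ) := by exact_mod_cast sum_rowC F
  have hCsum : ∑ j, ((colC F j : ℤ)) = (S : ℤ) := by exact_mod_cast sum_colC F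
  -- Cauchy–Schwarz
  have hCS1 : (S : ℤ) ^ 2 ≤ (n : ℤ) * ((∑ i, rowC F i ^ 2 : ℕ) : ℤ) := by
    have hcs := sq_sum_le_card_mul_sum_sq (s := (Finset.univ : Finset (Fin n)))
      (f := fun i => (rowC F i : ℤ))
    rw [hRsum] at hcs
    have hcast : ((∑ i, rowC F i ^ 2 : ℕ) : ℤ) = ∑ i, ((rowC F i : ℤ)) ^ 2 := by
      push_cast; ring
    rw [hcast]
    simpa using hcs
  have hCS2 : (S : ℤ) ^ 2 ≤ (n : ℤ) * ((∑ j, colC F j ^ 2 : ℕ) : ℤ) := by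
    have hcs := sq_sum_le_card_mul_sum_sq (s := (Finset.univ : Finset (Fin n)))
      (f := fun j => (colC F j : ℤ))
    rw [hCsum] at hcs
    have hcast : ((∑ j, colC F j ^ 2 : ℕ) : ℤ) = ∑ j, ((colC F j : ℤ)) ^ 2 := by
      push_cast; ring
    rw [hcast]
    simpa using hcs
  -- cast the main inequality and identities
  have castmain : ((n : ℤ) - 1) * ((n : ℤ) ^ 2 - (S : ℤ))
      ≤ ((∑ i, (n - rowC F i) * rowC F i : ℕ) : ℤ)
        + ((∑ j, (n - colC F j) * colC F j : ℕ) : ℤ) := by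
    have h' := hmain
    have hc1 : (((n - 1) * (n ^ 2 - S) : ℕ) : ℤ)
        = ((n : ℤ) - 1) * ((n : ℤ) ^ 2 - (S : ℤ)) := by
      push_cast [Nat.cast_sub h1n, Nat.cast_sub hSle]
      ring
    calc ((n : ℤ) - 1) * ((n : ℤ) ^ 2 - (S : ℤ))
        = (((n - 1) * (n ^ 2 - S) : ℕ) : ℤ) := hc1.symm
      _ ≤ _ := by exact_mod_cast h'
  have castA : ((∑ i, (n - rowC F i) * rowC F i : ℕ) : ℤ)
      + ((∑ i, rowC F i ^ 2 : ℕ) : ℤ) = (n : ℤ) * (S : ℤ) := by exact_mod_cast hAsum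
  have castB : ((∑ j, (n - colC F j) * colC F j : ℕ) : ℤ)
      + ((∑ j, colC F j ^ 2 : ℕ) : ℤ) = (n : ℤ) * (S : ℤ) := by exact_mod_cast hBsum
  have ha : (0 : ℤ) ≤ (n : ℤ) := by positivity
  have hpos : (0 : ℤ) < (n : ℤ) ^ 2 - (S : ℤ) := by
    have : (S : ℤ) < (n : ℤ) ^ 2 := by exact_mod_cast hcase
    linarith
  have h2s : (n : ℤ) * ((n : ℤ) - 1) ≤ 2 * (S : ℤ) :=
    arith_step (n : ℤ) (S : ℤ) _ _ _ _ castmain castA castB hCS1 hCS2 ha hpos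
  have hfinalN : n * (n - 1) ≤ 2 * S := by
    zify [h1n]
    linarith
  calc n * (n - 1) / 2 ≤ 2 * S / 2 := Nat.div_le_div_right hfinalN
    _ = S := Nat.mul_div_cancel_left S (by norm_num)

/-- the circulant construction -/
def M0 (n m : ℕ) : Finset (Fin n × Fin n) :=
  Finset.univ.filter (fun p => (p.2 - p.1).val < m)

lemma card_lt_filter (hm : m ≤ n) :
    ((Finset.univ : Finset (Fin n)).filter (fun x => x.val < m)).card = m := by
  have h : ((Finset.univ : Finset (Fin n)).filter (fun x => x.val < m)).card
      = (Finset.range m).card := by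
    refine Finset.card_nbij (fun x => x.val) (fun x hx => ?_) (fun x hx y hy hxy => ?_)
      (fun a ha => ?_)
    · simp only [Finset.mem_coe, Finset.mem_filter] at hx
      simpa using hx.2
    · exact Fin.val_injective hxy
    · simp only [Finset.coe_range, Set.mem_Iio] at ha
      have han : a < n := lt_of_lt_of_le ha hm
      refine ⟨⟨a, han⟩, ?_, rfl⟩
      simp [ha]
  rw [h, Finset.card_range]

lemma rowC_M0 [NeZero n] (hm : m ≤ n) (i : Fin n) : rowC (M0 n m) i = m := by
  rw [rowC, M0, Finset.filter_filter]
  have h : (Finset.univ.filter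
        (fun p : Fin n × Fin n => (p.2 - p.1).val < m ∧ p.1 = i)).card
      = ((Finset.univ : Finset (Fin n)).filter (fun x => x.val < m)).card := by
    refine Finset.card_nbij' (fun p => p.2 - p.1) (fun x => (i, x + i))
      (fun p hp => ?_) (fun x hx => ?_) (fun p hp => ?_) (fun x hx => ?_)
    · exact Finset.mem_filter.mpr ⟨Finset.mem_univ _, (Finset.mem_filter.mp hp).2.1⟩
    · refine Finset.mem_filter.mpr ⟨Finset.mem_univ _, ?_, rfl⟩
      show ((x + i) - i).val < m
      rw [add_sub_cancel_right]
      exact (Finset.mem_filter.mp hx).2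
    · have h2 := (Finset.mem_filter.mp hp).2.2
      show (i, p.2 - p.1 + i) = p
      rw [← h2, sub_add_cancel]
    · show x + i - i = x
      rw [add_sub_cancel_right]
  rw [h, card_lt_filter hm]

lemma colC_M0 [NeZero n] (hm : m ≤ n) (j : Fin n) : colC (M0 n m) j = m := by
  rw [colC, M0, Finset.filter_filter]
  have h : (Finset.univ.filter
        (fun p : Fin n × Fin n => (p.2 - p.1).val < m ∧ p.2 = j)).card
      = ((Finset.univ : Finset (Fin n)).filter (fun x => x.val < m)).card := by
    refine Finset.card_nbij' (fun p => p.2 - p.1) (fun x => (j - x, j))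
      (fun p hp => ?_) (fun x hx => ?_) (fun p hp => ?_) (fun x hx => ?_)
    · exact Finset.mem_filter.mpr ⟨Finset.mem_univ _, (Finset.mem_filter.mp hp).2.1⟩
    · refine Finset.mem_filter.mpr ⟨Finset.mem_univ _, ?_, rfl⟩
      show (j - (j - x)).val < m
      rw [sub_sub_cancel]
      exact (Finset.mem_filter.mp hx).2
    · have h2 := (Finset.mem_filter.mp hp).2.2
      have e : j - (p.2 - p.1) = p.1 := by rw [h2, sub_sub_cancel]
      show (j - (p.2 - p.1), j) = p
      rw [e, ← h2]
    · show j - (j - x) = x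
      rw [sub_sub_cancel]
  rw [h, card_lt_filter hm]

lemma card_M0 [NeZero n] (hm : m ≤ n) : (M0 n m).card = n * m := by
  rw [← sum_rowC]
  rw [Finset.sum_congr rfl (fun i _ => rowC_M0 hm i), Finset.sum_const, smul_eq_mul,
    Finset.card_univ, Fintype.card_fin]

end MonRookAux

/-- For odd `n ≥ 3`, `mon_{n−1}(K_n □ K_n) = n(n−1)/2`. -/
theorem mon_rook_majority (n : ℕ) (hn : 3 ≤ n) (hodd : Odd n) :
    monNum ((completeGraph (Fin n)).boxProd (completeGraph (Fin n))) (n - 1)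
      = n * (n - 1) / 2 := by
  classical
  have : NeZero n := ⟨by omega⟩
  obtain ⟨k, hk⟩ := hodd
  set G := (completeGraph (Fin n)).boxProd (completeGraph (Fin n)) with hG
  set 𝒮 := {s | ∃ M : Set (Fin n × Fin n), IsMonopoly G (n - 1) M ∧ M.ncard = s} with h𝒮
  have hkn : k ≤ n := by omega
  have hval : n * (n - 1) / 2 = n * k := by
    have h1 : n - 1 = 2 * k := by omega
    rw [h1, show n * (2 * k) = 2 * (n * k) by ring, Nat.mul_div_cancel_left _ (by norm_num)]
  have hmem : n * (n - 1) / 2 ∈ 𝒮 := by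
    refine ⟨↑(MonRookAux.M0 n k), ?_, ?_⟩
    · intro v hv
      have hv' : v ∉ MonRookAux.M0 n k := by simpa using hv
      rw [MonRookAux.ncount _ v hv', MonRookAux.rowC_M0 hkn, MonRookAux.colC_M0 hkn]
      omega
    · rw [Set.ncard_coe_finset, MonRookAux.card_M0 hkn, hval]
  have hlb : ∀ s ∈ 𝒮, n * (n - 1) / 2 ≤ s := by
    rintro s ⟨M, hM, rfl⟩
    set F := M.toFinite.toFinset with hF
    have hMF : (↑F : Set (Fin n × Fin n)) = M := M.toFinite.coe_toFinset
    have hcard : M.ncard = F.card := Set.ncard_eq_toFinset_card M M.toFinite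
    rw [hcard]
    refine MonRookAux.lower_bound hn F (fun p hp => ?_)
    have hpM : p ∉ M := by rw [← hMF]; simpa using hp
    have := hM p hpM
    rwa [← hMF, MonRookAux.ncount F p hp] at this
  exact le_antisymm (Nat.sInf_le hmem) (hlb _ (Nat.sInf_mem ⟨_, hmem⟩))
end

section
/- For every n ≥ 3, the minimum size of a 2-dynamic monopoly in C_n □ K_n equals ⌊n/2 + 1⌋. -/
open SimpleGraph

/-- One step of the activation process: add every vertex having at least `τ v` active neighbors. -/
def activStep {V : Type*} (G : SimpleGraph V) (τ : V → ℕ) (A : Set V) : Set V :=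
  A ∪ {v | τ v ≤ (G.neighborSet v ∩ A).ncard}

/-- `D` is a `τ`-dynamic monopoly: iterating the activation process from `D` activates all of `V`. -/
def IsDynMonopoly {V : Type*} (G : SimpleGraph V) (τ : V → ℕ) (D : Set V) : Prop :=
  ∃ k : ℕ, (activStep G τ)^[k] D = Set.univ

/-- The `τ`-dynamic monopoly number: least cardinality of a `τ`-dynamic monopoly. -/
noncomputable def dynNum {V : Type*} (G : SimpleGraph V) (τ : V → ℕ) : ℕ :=
  sInf {k | ∃ D : Set V, IsDynMonopoly G τ D ∧ D.ncard = k}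

/-- Dynamic monopoly number with constant threshold `t`. -/
noncomputable def dynNumC {V : Type*} (G : SimpleGraph V) (t : ℕ) : ℕ :=
  dynNum G (fun _ => t)

set_option linter.unusedSectionVars false
open Fin.NatCast Fin.CommRing

section Basic
variable {V : Type*} [Finite V] (G : SimpleGraph V) (τ : V → ℕ)

theorem subset_activStep (A : Set V) : A ⊆ activStep G τ A := Set.subset_union_left

theorem activStep_mono {A B : Set V} (h : A ⊆ B) : activStep G τ A ⊆ activStep G τ B := by
  apply Set.union_subset_union h
  intro v hv
  exact le_trans hv (Set.ncard_le_ncard (Set.inter_subset_inter_right _ h) (Set.toFinite _))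

theorem iterate_activStep_mono {A : Set V} {k l : ℕ} (h : k ≤ l) :
    (activStep G τ)^[k] A ⊆ (activStep G τ)^[l] A := by
  obtain ⟨m, rfl⟩ := Nat.exists_eq_add_of_le h
  induction m with
  | zero => rfl
  | succ m ih =>
    calc (activStep G τ)^[k] A ⊆ (activStep G τ)^[k+m] A := ih (by omega)
    _ ⊆ (activStep G τ)^[k+(m+1)] A := by
        rw [← add_assoc, Function.iterate_succ_apply']
        exact subset_activStep G τ _

end Basic
set_option linter.unusedSectionVars false

section Ev
variable {V : Type*} [Finite V] (G : SimpleGraph V) (τ : V → ℕ) (D : Set V)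

/-- `v` is eventually activated. -/
def Ev (v : V) : Prop := ∃ k, v ∈ (activStep G τ)^[k] D

variable {G τ D}

theorem Ev.of_mem {v : V} (h : v ∈ D) : Ev G τ D v := ⟨0, h⟩

theorem Ev.fire {v a b : V} (hτ : τ v ≤ 2) (ha : G.Adj v a) (hb : G.Adj v b) (hab : a ≠ b)
    (hea : Ev G τ D a) (heb : Ev G τ D b) : Ev G τ D v := by
  obtain ⟨ka, hka⟩ := hea
  obtain ⟨kb, hkb⟩ := heb
  refine ⟨max ka kb + 1, ?_⟩
  rw [Function.iterate_succ_apply']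
  refine Or.inr ?_
  refine le_trans hτ ?_
  rw [show (2:ℕ) = 1 + 1 by rfl, Nat.add_one_le_iff, Set.one_lt_ncard (Set.toFinite _)]
  exact ⟨a, ⟨ha, iterate_activStep_mono G τ (le_max_left _ _) hka⟩,
    b, ⟨hb, iterate_activStep_mono G τ (le_max_right _ _) hkb⟩, hab⟩

theorem isDynMonopoly_of_forall_ev (hev : ∀ v, Ev G τ D v) : IsDynMonopoly G τ D := by
  have : Nonempty (Fintype V) := ⟨Fintype.ofFinite V⟩
  obtain ⟨i⟩ := this
  choose f hf using hev
  refine ⟨Finset.univ.sup f, ?_⟩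
  apply Set.eq_univ_of_forall
  intro v
  exact iterate_activStep_mono G τ (Finset.le_sup (Finset.mem_univ v)) (hf v)

/-- Invariants preserved by one activation step hold along the whole process. -/
theorem invariant_iterate {P : Set V → Prop} (hP : ∀ A, P A → P (activStep G τ A))
    (hD : P D) (k : ℕ) : P ((activStep G τ)^[k] D) := by
  induction k with
  | zero => exact hD
  | succ k ih => rw [Function.iterate_succ_apply']; exact hP _ ih

theorem exists_two_active_neighbors {A : Set V} {v : V} (hv : v ∈ activStep G τ A)
    (hvA : v ∉ A) (hτ : 2 ≤ τ v) :
    ∃ a b, G.Adj v a ∧ G.Adj v b ∧ a ∈ A ∧ b ∈ A ∧ a ≠ b := by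
  rcases hv with h | h
  · exact absurd h hvA
  · have h2 : 1 < (G.neighborSet v ∩ A).ncard := lt_of_lt_of_le (by omega) h
    rw [Set.one_lt_ncard (Set.toFinite _)] at h2
    obtain ⟨a, ⟨haN, haA⟩, b, ⟨hbN, hbA⟩, hab⟩ := h2
    exact ⟨a, b, haN, hbN, haA, hbA, hab⟩

end Ev
section CK
variable {m : ℕ}

theorem cyc_adj_succ (i : Fin (m + 3)) : (cycleGraph (m + 3)).Adj i (i + 1) := by
  rw [cycleGraph_adj']
  right
  rw [add_sub_cancel_left, Fin.val_one]

theorem cyc_adj_cases {i k : Fin (m + 3)} (h : (cycleGraph (m + 3)).Adj i k) :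
    k = i + 1 ∨ i = k + 1 := by
  rw [cycleGraph_adj'] at h
  have e1 : ∀ a b : Fin (m + 3), (a - b).val = 1 → a = b + 1 := by
    intro a b hab
    have : a - b = 1 := Fin.ext (by rw [hab, Fin.val_one])
    rw [sub_eq_iff_eq_add] at this
    rw [this]; ring
  rcases h with h | h
  · exact Or.inr (e1 _ _ h)
  · exact Or.inl (e1 _ _ h)

theorem ck_adj {p q : Fin (m+3) × Fin (m+3)} :
    ((cycleGraph (m+3)).boxProd (completeGraph (Fin (m+3)))).Adj p q ↔
      ((cycleGraph (m+3)).Adj p.1 q.1 ∧ p.2 = q.2) ∨ (p.2 ≠ q.2 ∧ p.1 = q.1) := by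
  rw [boxProd_adj]; rfl

theorem ck_adj_horiz (i : Fin (m+3)) (j : Fin (m+3)) :
    ((cycleGraph (m+3)).boxProd (completeGraph (Fin (m+3)))).Adj (i, j) (i + 1, j) := by
  rw [ck_adj]; exact Or.inl ⟨cyc_adj_succ i, rfl⟩

theorem ck_adj_vert (i : Fin (m+3)) {j j' : Fin (m+3)} (h : j ≠ j') :
    ((cycleGraph (m+3)).boxProd (completeGraph (Fin (m+3)))).Adj (i, j) (i, j') := by
  rw [ck_adj]; exact Or.inr ⟨h, rfl⟩

end CK
section Invariants
variable {m : ℕ}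

abbrev GK (m : ℕ) : SimpleGraph (Fin (m+3) × Fin (m+3)) :=
  (cycleGraph (m+3)).boxProd (completeGraph (Fin (m+3)))

theorem ck_nbr_cases {p a : Fin (m+3) × Fin (m+3)} (h : (GK m).Adj p a) :
    (a.1 = p.1 ∧ a.2 ≠ p.2) ∨ a = (p.1 + 1, p.2) ∨ a = (p.1 - 1, p.2) := by
  rw [ck_adj] at h
  rcases h with ⟨hc, he⟩ | ⟨hne, he⟩
  · rcases cyc_adj_cases hc with h1 | h1
    · exact Or.inr (Or.inl (Prod.ext h1 he.symm))
    · refine Or.inr (Or.inr (Prod.ext ?_ he.symm))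
      rw [h1, add_sub_cancel_right]
  · exact Or.inl ⟨he.symm, fun hh => hne hh.symm⟩

theorem inv_empty_pair (i : Fin (m+3)) (A : Set (Fin (m+3) × Fin (m+3)))
    (h : ∀ j, (i,j) ∉ A ∧ (i+1,j) ∉ A) :
    ∀ j, (i,j) ∉ activStep (GK m) (fun _ => 2) A ∧ (i+1,j) ∉ activStep (GK m) (fun _ => 2) A := by
  intro j
  constructor
  · intro hs
    obtain ⟨a, b, ha, hb, haA, hbA, hab⟩ :=
      exists_two_active_neighbors hs (h j).1 (le_refl 2)
    have key : ∀ c, (GK m).Adj (i,j) c → c ∈ A → c = (i - 1, j) := by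
      intro c hc hcA
      rcases ck_nbr_cases hc with ⟨h1, _⟩ | h1 | h1
      · exact absurd hcA (by obtain ⟨c1, c2⟩ := c; cases h1; exact (h _).1)
      · exact absurd hcA (h1 ▸ (h j).2)
      · exact h1
    exact hab ((key a ha haA).trans (key b hb hbA).symm)
  · intro hs
    obtain ⟨a, b, ha, hb, haA, hbA, hab⟩ :=
      exists_two_active_neighbors hs (h j).2 (le_refl 2)
    have key : ∀ c, (GK m).Adj (i+1,j) c → c ∈ A → c = (i + 1 + 1, j) := by
      intro c hc hcA
      rcases ck_nbr_cases hc with ⟨h1, _⟩ | h1 | h1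
      · exact absurd hcA (by obtain ⟨c1, c2⟩ := c; cases h1; exact (h _).2)
      · exact h1
      · exact absurd hcA (by rw [add_sub_cancel_right] at h1; exact h1 ▸ (h j).1)
    exact hab ((key a ha haA).trans (key b hb hbA).symm)

/-- Invariant: each column contains at most one active vertex, and active vertices in
adjacent columns lie in the same row. -/
def Inv2 (A : Set (Fin (m+3) × Fin (m+3))) : Prop :=
  (∀ i j j', (i,j) ∈ A → (i,j') ∈ A → j = j') ∧
  (∀ i j j', (i,j) ∈ A → (i+1,j') ∈ A → j = j')

theorem inv2_new {A : Set (Fin (m+3) × Fin (m+3))} (h : Inv2 A) {i j}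
    (hs : (i,j) ∈ activStep (GK m) (fun _ => 2) A) (hn : (i,j) ∉ A) :
    (i - 1, j) ∈ A ∧ (i + 1, j) ∈ A := by
  obtain ⟨a, b, ha, hb, haA, hbA, hab⟩ := exists_two_active_neighbors hs hn (le_refl 2)
  have hmix : ∀ ja, (i, ja) ∈ A → ja ≠ j → (i+1, j) ∉ A ∧ (i-1, j) ∉ A := by
    intro ja hja hne
    refine ⟨fun hA => hne (h.2 i ja j hja hA), fun hA => ?_⟩
    refine hne.symm (h.2 (i-1) j ja hA ?_)
    rwa [sub_add_cancel]
  rcases ck_nbr_cases ha with ⟨ha1, ha2⟩ | ha' | ha' <;>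
    rcases ck_nbr_cases hb with ⟨hb1, hb2⟩ | hb' | hb'
  · -- both colmates
    exfalso
    obtain ⟨a1, a2⟩ := a; obtain ⟨b1, b2⟩ := b
    simp only at ha1 hb1 ha2 hb2
    subst ha1; subst hb1
    exact hab (Prod.ext rfl (h.1 _ a2 b2 haA hbA))
  · exfalso
    obtain ⟨a1, a2⟩ := a
    simp only at ha1 ha2
    subst ha1
    exact (hmix a2 haA ha2).1 (hb' ▸ hbA)
  · exfalso
    obtain ⟨a1, a2⟩ := a
    simp only at ha1 ha2
    subst ha1
    exact (hmix a2 haA ha2).2 (hb' ▸ hbA)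
  · exfalso
    obtain ⟨b1, b2⟩ := b
    simp only at hb1 hb2
    subst hb1
    exact (hmix b2 hbA hb2).1 (ha' ▸ haA)
  · exact absurd (ha'.trans hb'.symm) hab
  · exact ⟨hb' ▸ hbA, ha' ▸ haA⟩
  · exfalso
    obtain ⟨b1, b2⟩ := b
    simp only at hb1 hb2
    subst hb1
    exact (hmix b2 hbA hb2).2 (ha' ▸ haA)
  · exact ⟨ha' ▸ haA, hb' ▸ hbA⟩
  · exact absurd (ha'.trans hb'.symm) hab

theorem inv2_step {A : Set (Fin (m+3) × Fin (m+3))} (h : Inv2 A) :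
    Inv2 (activStep (GK m) (fun _ => 2) A) := by
  classical
  constructor
  · intro i j j' hj hj'
    by_cases hjA : (i,j) ∈ A <;> by_cases hj'A : (i,j') ∈ A
    · exact h.1 i j j' hjA hj'A
    · obtain ⟨hm, hp⟩ := inv2_new h hj' hj'A
      exact h.2 i j j' hjA hp
    · obtain ⟨hm, hp⟩ := inv2_new h hj hjA
      exact (h.2 i j' j hj'A hp).symm
    · obtain ⟨hm, _⟩ := inv2_new h hj hjA
      obtain ⟨hm', _⟩ := inv2_new h hj' hj'A
      exact h.1 (i-1) j j' hm hm'
  · intro i j j' hj hj'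
    by_cases hjA : (i,j) ∈ A <;> by_cases hj'A : (i+1,j') ∈ A
    · exact h.2 i j j' hjA hj'A
    · obtain ⟨hm, _⟩ := inv2_new h hj' hj'A
      rw [add_sub_cancel_right] at hm
      exact h.1 i j j' hjA hm
    · obtain ⟨_, hp⟩ := inv2_new h hj hjA
      exact h.1 (i+1) j j' hp hj'A
    · obtain ⟨_, hp⟩ := inv2_new h hj hjA
      obtain ⟨hm, _⟩ := inv2_new h hj' hj'A
      rw [add_sub_cancel_right] at hm
      exact (h.2 i j' j hm hp).symm
end Invariants
section Lower
variable {m : ℕ}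

theorem lower_bound_s12 {D : Set (Fin (m+3) × Fin (m+3))}
    (hD : IsDynMonopoly (GK m) (fun _ => 2) D) : (m+3)/2 + 1 ≤ D.ncard := by
  classical
  have h1 : ∀ i : Fin (m+3), (∃ j, (i,j) ∈ D) ∨ (∃ j, (i+1,j) ∈ D) := by
    intro i
    by_contra hcon
    push_neg at hcon
    obtain ⟨hc1, hc2⟩ := hcon
    obtain ⟨k, hk⟩ := hD
    have hinv := invariant_iterate (P := fun A => ∀ j, (i,j) ∉ A ∧ (i+1,j) ∉ A)
      (fun A hA => inv_empty_pair i A hA) (fun j => ⟨hc1 j, hc2 j⟩) k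
    rw [hk] at hinv
    exact (hinv 0).1 (Set.mem_univ _)
  set E : Finset (Fin (m+3)) := Finset.univ.filter (fun i => ∀ j, (i,j) ∉ D) with hE
  have hmemE : ∀ i : Fin (m+3), i ∈ E ↔ ∀ j, (i,j) ∉ D := by
    intro i; simp [hE]
  have hmemNE : ∀ i : Fin (m+3), i ∈ Eᶜ ↔ ∃ j, (i,j) ∈ D := by
    intro i; simp [hE]
  have hEcompl : ∀ i ∈ E, i + 1 ∈ Eᶜ := by
    intro i hi
    rcases h1 i with h | h
    · obtain ⟨j, hj⟩ := h; exact absurd hj ((hmemE i).mp hi j)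
    · exact (hmemNE _).mpr h
  have hcard1 : E.card ≤ Eᶜ.card :=
    Finset.card_le_card_of_injOn (fun i => i + 1) hEcompl
      (fun a _ b _ hab => by exact add_right_cancel hab)
  have hcompl : Eᶜ.card = (m+3) - E.card := by
    rw [Finset.card_compl, Fintype.card_fin]
  have hDfin : D.Finite := Set.toFinite D
  set Df : Finset (Fin (m+3) × Fin (m+3)) := hDfin.toFinset with hDf
  have hDcard : D.ncard = Df.card := Set.ncard_eq_toFinset_card D hDfin
  have hw : ∀ i ∈ Eᶜ, ∃ p : Fin (m+3) × Fin (m+3), p ∈ Df ∧ p.1 = i := by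
    intro i hi
    obtain ⟨j, hj⟩ := (hmemNE i).mp hi
    exact ⟨(i,j), hDfin.mem_toFinset.mpr hj, rfl⟩
  choose w hw1 hw2 using hw
  have hcard2 : Eᶜ.card ≤ Df.card :=
    Finset.card_le_card_of_injOn (fun i => if h : i ∈ Eᶜ then w i h else (i,i))
      (by intro a ha; simp only [Finset.mem_coe] at ha ⊢; simp only [dif_pos ha]; exact hw1 a ha)
      (by intro a ha b hb hab
          simp only [Finset.mem_coe] at ha hb
          have hab' : (if h : a ∈ Eᶜ then w a h else (a,a)) =
              (if h : b ∈ Eᶜ then w b h else (b,b)) := hab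
          rw [dif_pos ha, dif_pos hb] at hab'
          have h0 := congrArg Prod.fst hab'
          rwa [hw2 a ha, hw2 b hb] at h0)
  by_contra hlt
  push_neg at hlt
  have hne : Eᶜ.card = (m+3) / 2 ∧ E.card = (m+3) / 2 ∧ Df.card = (m+3) / 2 := by omega
  have hsurj := Finset.surj_on_of_inj_on_of_card_le (s := Eᶜ) (t := Df) w hw1
    (fun a b ha hb hab => by
      have h0 := congrArg Prod.fst hab
      rwa [hw2 a ha, hw2 b hb] at h0) (by omega)
  have hcol : ∀ i j j', (i,j) ∈ D → (i,j') ∈ D → j = j' := by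
    intro i j j' hj hj'
    obtain ⟨a, ha, hae⟩ := hsurj (i,j) (hDfin.mem_toFinset.mpr hj)
    obtain ⟨b, hb, hbe⟩ := hsurj (i,j') (hDfin.mem_toFinset.mpr hj')
    have hai : a = i := by
      have h0 := hw2 a ha; rw [← hae] at h0; exact h0.symm
    have hbi : b = i := by
      have h0 := hw2 b hb; rw [← hbe] at h0; exact h0.symm
    subst hai; subst hbi
    exact congrArg Prod.snd (hae.trans hbe.symm)
  have hsurj2 := Finset.surj_on_of_inj_on_of_card_le (s := E) (t := Eᶜ)
    (fun i _ => i + 1) hEcompl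
    (fun a b _ _ hab => add_right_cancel hab) (by omega)
  have hadj : ∀ i j j', (i,j) ∈ D → (i+1,j') ∈ D → j = j' := by
    intro i j j' hj hj'
    exfalso
    have hiNE : i ∈ Eᶜ := (hmemNE i).mpr ⟨j, hj⟩
    have hi1NE : i + 1 ∈ Eᶜ := (hmemNE _).mpr ⟨j', hj'⟩
    obtain ⟨e, he, hee⟩ := hsurj2 (i+1) hi1NE
    have heq : e = i := add_right_cancel hee.symm
    subst heq
    rw [Finset.mem_compl] at hiNE
    exact hiNE he
  obtain ⟨k, hk⟩ := hD
  have hinv := invariant_iterate (P := Inv2) (fun A hA => inv2_step hA) ⟨hcol, hadj⟩ k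
  rw [hk] at hinv
  have h01 : (0 : Fin (m+3)) = 1 := hinv.1 0 0 1 (Set.mem_univ _) (Set.mem_univ _)
  exact absurd h01 (by simp [Fin.ext_iff])
end Lower
section Upper
variable {m : ℕ}

/-- The seed set: a diagonal pair in columns 0,1 plus one seed in every other odd column. -/
def seedSet (m : ℕ) : Finset (Fin (m+3) × Fin (m+3)) :=
  {((0 : Fin (m+3)), (0 : Fin (m+3))), ((1 : Fin (m+3)), (1 : Fin (m+3)))} ∪
    (Finset.Icc 1 ((m+3)/2 - 1)).image (fun t => (((2*t+1 : ℕ) : Fin (m+3)), (0 : Fin (m+3))))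

theorem seed_lt {t : ℕ} (ht : t ≤ (m+3)/2 - 1) : 2*t+1 < m+3 := by omega

theorem cast_succ (a : ℕ) : ((a : Fin (m+3))) + 1 = ((a+1 : ℕ) : Fin (m+3)) := by
  push_cast; ring

theorem cast_ne {a b : ℕ} (ha : a < m+3) (hb : b < m+3) (hab : a ≠ b) :
    (a : Fin (m+3)) ≠ (b : Fin (m+3)) := by
  intro h
  apply hab
  rw [Fin.ext_iff, Fin.val_cast_of_lt ha, Fin.val_cast_of_lt hb] at h
  exact h

theorem adjH (a : ℕ) (j : Fin (m+3)) :
    (GK m).Adj ((a : Fin (m+3)), j) (((a+1 : ℕ) : Fin (m+3)), j) := by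
  rw [← cast_succ]; exact ck_adj_horiz _ j

theorem seedSet_card : (seedSet m).card = (m+3)/2 + 1 := by
  rw [seedSet, Finset.card_union_of_disjoint, Finset.card_image_of_injOn]
  · rw [Nat.card_Icc]
    have h2 : ({((0 : Fin (m+3)), (0 : Fin (m+3))), ((1 : Fin (m+3)), (1 : Fin (m+3)))} :
        Finset (Fin (m+3) × Fin (m+3))).card = 2 := by
      rw [Finset.card_insert_of_notMem, Finset.card_singleton]
      simp only [Finset.mem_singleton]
      intro h
      exact absurd (congrArg Prod.fst h) (by simp [Fin.ext_iff])
    omega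
  · intro a ha b hb hab
    simp only [Finset.coe_Icc, Set.mem_Icc] at ha hb
    have := congrArg Prod.fst hab
    simp only at this
    rw [Fin.ext_iff, Fin.val_cast_of_lt (seed_lt ha.2), Fin.val_cast_of_lt (seed_lt hb.2)]
      at this
    omega
  · rw [Finset.disjoint_left]
    intro p hp hpi
    simp only [Finset.mem_insert, Finset.mem_singleton] at hp
    simp only [Finset.mem_image, Finset.mem_Icc] at hpi
    obtain ⟨t, ⟨ht1, ht2⟩, hte⟩ := hpi
    rcases hp with rfl | rfl
    · have h0 := congrArg Prod.fst hte
      simp only at h0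
      rw [Fin.ext_iff, Fin.val_cast_of_lt (seed_lt ht2)] at h0
      simp at h0
    · have h0 := congrArg Prod.snd hte
      simp only at h0
      rw [Fin.ext_iff] at h0
      simp at h0

theorem seed_mem {t : ℕ} (ht1 : 1 ≤ t) (ht2 : t ≤ (m+3)/2 - 1) :
    (((2*t+1 : ℕ) : Fin (m+3)), (0 : Fin (m+3))) ∈ seedSet m := by
  rw [seedSet, Finset.mem_union]
  right
  rw [Finset.mem_image]
  exact ⟨t, Finset.mem_Icc.mpr ⟨ht1, ht2⟩, rfl⟩

theorem ev_cols : ∀ (t : ℕ), t ≤ (m+3)/2 - 1 →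
    ∀ j, Ev (GK m) (fun _ => 2) (↑(seedSet m)) (((2*t : ℕ) : Fin (m+3)), j) ∧
         Ev (GK m) (fun _ => 2) (↑(seedSet m)) (((2*t+1 : ℕ) : Fin (m+3)), j) := by
  intro t
  induction t with
  | zero =>
    intro _ j
    have e00 : Ev (GK m) (fun _ => 2) (↑(seedSet m)) ((0 : Fin (m+3)), 0) := by
      apply Ev.of_mem
      rw [Finset.mem_coe, seedSet, Finset.mem_union]
      exact Or.inl (Finset.mem_insert_self _ _)
    have e11 : Ev (GK m) (fun _ => 2) (↑(seedSet m)) ((1 : Fin (m+3)), 1) := by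
      apply Ev.of_mem
      rw [Finset.mem_coe, seedSet, Finset.mem_union]
      exact Or.inl (Finset.mem_insert_of_mem (Finset.mem_singleton_self _))
    have h01 : (0 : Fin (m+3)) ≠ 1 := by simp [Fin.ext_iff]
    have hc01 : (cycleGraph (m+3)).Adj 0 1 := by
      have := cyc_adj_succ (0 : Fin (m+3))
      rwa [zero_add] at this
    have e01 : Ev (GK m) (fun _ => 2) (↑(seedSet m)) ((0 : Fin (m+3)), 1) := by
      refine Ev.fire (le_refl 2) (a := ((0:Fin (m+3)), 0)) (b := ((1:Fin (m+3)), 1))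
        ?_ ?_ ?_ e00 e11
      · exact ck_adj_vert _ h01.symm
      · rw [ck_adj]; exact Or.inl ⟨hc01, rfl⟩
      · intro h; exact h01 (congrArg Prod.fst h)
    have e10 : Ev (GK m) (fun _ => 2) (↑(seedSet m)) ((1 : Fin (m+3)), 0) := by
      refine Ev.fire (le_refl 2) (a := ((1:Fin (m+3)), 1)) (b := ((0:Fin (m+3)), 0))
        ?_ ?_ ?_ e11 e00
      · exact ck_adj_vert _ h01
      · rw [ck_adj]; exact Or.inl ⟨hc01.symm, rfl⟩
      · intro h; exact h01 ((congrArg Prod.fst h).symm)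
    have key : ∀ j : Fin (m+3), Ev (GK m) (fun _ => 2) (↑(seedSet m)) ((0 : Fin (m+3)), j) := by
      intro j
      by_cases hj0 : j = 0
      · exact hj0 ▸ e00
      by_cases hj1 : j = 1
      · exact hj1 ▸ e01
      · refine Ev.fire (le_refl 2) (a := ((0:Fin (m+3)), 0)) (b := ((0:Fin (m+3)), 1))
          (ck_adj_vert _ hj0) (ck_adj_vert _ hj1) ?_ e00 e01
        intro h; exact h01 (congrArg Prod.snd h)
    have key1 : ∀ j : Fin (m+3), Ev (GK m) (fun _ => 2) (↑(seedSet m)) ((1 : Fin (m+3)), j) := by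
      intro j
      by_cases hj0 : j = 0
      · exact hj0 ▸ e10
      by_cases hj1 : j = 1
      · exact hj1 ▸ e11
      · refine Ev.fire (le_refl 2) (a := ((1:Fin (m+3)), 0)) (b := ((1:Fin (m+3)), 1))
          (ck_adj_vert _ hj0) (ck_adj_vert _ hj1) ?_ e10 e11
        intro h; exact h01 (congrArg Prod.snd h)
    constructor
    · simpa using key j
    · simpa using key1 j
  | succ t ih =>
    intro ht1 j
    have ht : t ≤ (m+3)/2 - 1 := by omega
    have iht := ih ht
    have hseed : Ev (GK m) (fun _ => 2) (↑(seedSet m)) (((2*(t+1)+1 : ℕ) : Fin (m+3)), 0) :=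
      Ev.of_mem (Finset.mem_coe.mpr (seed_mem (by omega) (by omega)))
    have hlt1 : 2*t+1 < m+3 := seed_lt ht
    have hlt3 : 2*t+3 < m+3 := by
      have := seed_lt ht1; omega
    have hlt2 : 2*t+2 < m+3 := by omega
    -- new column 2t+2, row 0
    have e20 : Ev (GK m) (fun _ => 2) (↑(seedSet m)) (((2*t+2 : ℕ) : Fin (m+3)), 0) := by
      refine Ev.fire (le_refl 2) (a := (((2*t+1 : ℕ) : Fin (m+3)), 0))
        (b := (((2*t+3 : ℕ) : Fin (m+3)), 0)) ((adjH (2*t+1) 0).symm) ?_ ?_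
        ((ih ht 0).2) ?_
      · have h3 := adjH (m := m) (2*t+2) 0
        rwa [show 2*t+2+1 = 2*t+3 by omega] at h3
      · intro h
        exact cast_ne hlt1 hlt3 (by omega) (congrArg Prod.fst h)
      · have : 2*(t+1)+1 = 2*t+3 := by omega
        rw [← this]; exact hseed
    -- rest of column 2t+2
    have e2j : ∀ j, Ev (GK m) (fun _ => 2) (↑(seedSet m)) (((2*t+2 : ℕ) : Fin (m+3)), j) := by
      intro j
      by_cases hj : j = 0
      · exact hj ▸ e20
      · refine Ev.fire (le_refl 2) (a := (((2*t+1 : ℕ) : Fin (m+3)), j))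
          (b := (((2*t+2 : ℕ) : Fin (m+3)), 0)) ((adjH (2*t+1) j).symm)
          (ck_adj_vert _ hj) ?_ ((ih ht j).2) e20
        intro h
        exact cast_ne hlt1 hlt2 (by omega) (congrArg Prod.fst h)
    -- column 2t+3
    have e3j : ∀ j, Ev (GK m) (fun _ => 2) (↑(seedSet m)) (((2*t+3 : ℕ) : Fin (m+3)), j) := by
      intro j
      by_cases hj : j = 0
      · subst hj
        have : 2*(t+1)+1 = 2*t+3 := by omega
        rw [← this]; exact hseed
      · refine Ev.fire (le_refl 2) (a := (((2*t+2 : ℕ) : Fin (m+3)), j))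
          (b := (((2*t+3 : ℕ) : Fin (m+3)), 0)) ((adjH (2*t+2) j).symm)
          (ck_adj_vert _ hj) ?_ (e2j j) ?_
        · intro h
          exact cast_ne hlt2 hlt3 (by omega) (congrArg Prod.fst h)
        · have : 2*(t+1)+1 = 2*t+3 := by omega
          rw [← this]; exact hseed
    constructor
    · have : 2*(t+1) = 2*t+2 := by omega
      rw [this]; exact e2j j
    · have : 2*(t+1)+1 = 2*t+3 := by omega
      rw [this]; exact e3j j

theorem seedSet_monopoly : IsDynMonopoly (GK m) (fun _ => 2) (↑(seedSet m)) := by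
  apply isDynMonopoly_of_forall_ev
  rintro ⟨i, j⟩
  have hi : i = ((i.val : ℕ) : Fin (m+3)) := (Fin.cast_val_eq_self i).symm
  have hival : i.val < m + 3 := i.isLt
  by_cases hsmall : i.val ≤ 2*((m+3)/2 - 1) + 1
  · rcases Nat.even_or_odd i.val with ⟨t, ht⟩ | ⟨t, ht⟩
    · have h := (ev_cols t (by omega) j).1
      rw [hi, show i.val = 2*t by omega]
      exact h
    · have h := (ev_cols t (by omega) j).2
      rw [hi, show i.val = 2*t+1 by omega]
      exact h
  · -- last column, n odd
    have hiv : i.val = m + 2 := by omega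
    have hodd : m + 2 = 2*((m+3)/2 - 1) + 1 + 1 := by omega
    have ha : Ev (GK m) (fun _ => 2) (↑(seedSet m)) (((m+1 : ℕ) : Fin (m+3)), j) := by
      rcases Nat.even_or_odd (m+1) with ⟨t, ht⟩ | ⟨t, ht⟩
      · have h := (ev_cols t (by omega) j).1
        rw [show (m+1) = 2*t by omega]; exact h
      · have h := (ev_cols t (by omega) j).2
        rw [show (m+1) = 2*t+1 by omega]; exact h
    have hb : Ev (GK m) (fun _ => 2) (↑(seedSet m)) (((0 : ℕ) : Fin (m+3)), j) := by
      have h := (ev_cols 0 (by omega) j).1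
      simpa using h
    refine Ev.fire (le_refl 2) (a := (((m+1 : ℕ) : Fin (m+3)), j))
      (b := (((0 : ℕ) : Fin (m+3)), j)) ?_ ?_ ?_ ha hb
    · rw [hi, hiv]
      exact (adjH (m+1) j).symm
    · rw [hi, hiv]
      have h3 := adjH (m := m) (m+2) j
      have hz : ((m+2+1 : ℕ) : Fin (m+3)) = ((0:ℕ) : Fin (m+3)) := by
        simp only [Fin.ext_iff, Fin.val_natCast, show m+2+1 = m+3 by omega, Nat.mod_self,
          Nat.zero_mod]
      rwa [hz] at h3
    · intro h
      exact cast_ne (by omega) (by omega) (by omega) (congrArg Prod.fst h)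

end Upper

/-- For `n ≥ 3`, `dyn₂(C_n □ K_n) = ⌊n/2 + 1⌋`. -/
theorem dyn2_cycle_complete (n : ℕ) (hn : 3 ≤ n) :
    dynNumC ((cycleGraph n).boxProd (completeGraph (Fin n))) 2 = n / 2 + 1 := by
  obtain ⟨m, rfl⟩ : ∃ m, n = m + 3 := ⟨n - 3, by omega⟩
  unfold dynNumC dynNum
  have hmem : ((m+3)/2 + 1) ∈ {k | ∃ D : Set (Fin (m+3) × Fin (m+3)),
      IsDynMonopoly ((cycleGraph (m+3)).boxProd (completeGraph (Fin (m+3)))) (fun _ => 2) D ∧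
      D.ncard = k} :=
    ⟨↑(seedSet m), seedSet_monopoly, by rw [Set.ncard_coe_finset, seedSet_card]⟩
  apply le_antisymm
  · exact Nat.sInf_le hmem
  · refine le_csInf ⟨_, hmem⟩ ?_
    rintro k ⟨D, hD, rfl⟩
    exact lower_bound_s12 hD
end

section
/- Let m ≥ 3, t ≥ 4 and n ≥ t − 1 be positive integers. Then the minimum size of a t-dynamic monopoly in C_m □ K_n equals m(t−2). -/
open SimpleGraph

namespace DynCK

/-! ### Generic lemmas about the activation process -/

variable {V : Type*}

lemma subset_activStep (G : SimpleGraph V) (τ : V → ℕ) (A : Set V) :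
    A ⊆ activStep G τ A := Set.subset_union_left

lemma activStep_mono [Finite V] (G : SimpleGraph V) (τ : V → ℕ) {A B : Set V} (h : A ⊆ B) :
    activStep G τ A ⊆ activStep G τ B := by
  intro v hv
  rcases hv with hv | hv
  · exact Or.inl (h hv)
  · exact Or.inr <| le_trans hv
      (Set.ncard_le_ncard (Set.inter_subset_inter_right _ h) (Set.toFinite _))

lemma iterate_mono [Finite V] (G : SimpleGraph V) (τ : V → ℕ) {A B : Set V} (h : A ⊆ B) (k : ℕ) :
    (activStep G τ)^[k] A ⊆ (activStep G τ)^[k] B := by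
  induction k generalizing A B with
  | zero => exact h
  | succ k ih =>
    rw [Function.iterate_succ_apply, Function.iterate_succ_apply]
    exact ih (activStep_mono G τ h)

lemma subset_iterate [Finite V] (G : SimpleGraph V) (τ : V → ℕ) (A : Set V) (k : ℕ) :
    A ⊆ (activStep G τ)^[k] A := by
  induction k with
  | zero => exact subset_rfl
  | succ k ih =>
    rw [Function.iterate_succ_apply']
    exact ih.trans (subset_activStep G τ _)

/-- `B` is eventually contained in the closure of `A`. -/
def Reaches (G : SimpleGraph V) (τ : V → ℕ) (A B : Set V) : Prop :=
  ∃ k, B ⊆ (activStep G τ)^[k] A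

lemma Reaches.of_subset {G : SimpleGraph V} {τ : V → ℕ} {A B : Set V} (h : B ⊆ A) :
    Reaches G τ A B := ⟨0, h⟩

lemma Reaches.step {G : SimpleGraph V} {τ : V → ℕ} {A B : Set V} (h : B ⊆ activStep G τ A) :
    Reaches G τ A B := ⟨1, by simpa using h⟩

lemma Reaches.trans [Finite V] {G : SimpleGraph V} {τ : V → ℕ} {A B C : Set V}
    (h1 : Reaches G τ A B) (h2 : Reaches G τ B C) : Reaches G τ A C := by
  obtain ⟨k1, h1⟩ := h1
  obtain ⟨k2, h2⟩ := h2
  refine ⟨k2 + k1, ?_⟩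
  rw [Function.iterate_add_apply]
  exact h2.trans (iterate_mono G τ h1 k2)

lemma isDynMonopoly_of_reaches [Finite V] {G : SimpleGraph V} {τ : V → ℕ} {D : Set V}
    (h : Reaches G τ D Set.univ) : IsDynMonopoly G τ D := by
  obtain ⟨k, hk⟩ := h
  exact ⟨k, Set.eq_univ_of_univ_subset hk⟩

/-! ### The graph `C_m □ K_n` -/

variable {m n t : ℕ}

/-- Abbreviation for the box product of the cycle and the complete graph. -/
abbrev GG (m n : ℕ) : SimpleGraph (Fin m × Fin n) :=
  (cycleGraph m).boxProd (completeGraph (Fin n))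

lemma adj_iff {u v : Fin m × Fin n} :
    (GG m n).Adj u v ↔
      (((u.1 - v.1).val = 1 ∨ (v.1 - u.1).val = 1) ∧ u.2 = v.2) ∨ (u.1 = v.1 ∧ u.2 ≠ v.2) := by
  rw [boxProd_adj, cycleGraph_adj']
  simp only [completeGraph, top_adj]
  tauto

section FinFacts
variable [NeZero m]

/-- The last column. -/
def lastC (m : ℕ) [NeZero m] : Fin m :=
  ⟨m - 1, Nat.sub_lt (Nat.pos_of_ne_zero (NeZero.ne m)) one_pos⟩

lemma lastC_val : (lastC m).val = m - 1 := rfl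

variable (hm : 3 ≤ m)
include hm

lemma val_one' : (1 : Fin m).val = 1 := by
  rw [Fin.val_one']; exact Nat.mod_eq_of_lt (by omega)

lemma val_two' : ((1 : Fin m) + 1).val = 2 := by
  rw [Fin.val_add, val_one' hm]
  exact Nat.mod_eq_of_lt (by omega)

lemma one_ne_zero' : (1 : Fin m) ≠ 0 := by
  intro h
  have := congrArg Fin.val h
  rw [val_one' hm] at this
  simp at this

lemma sub_one_ne_self (i : Fin m) : i - 1 ≠ i := by
  intro h
  have h2 : i = i + 1 := by
    conv_lhs => rw [← sub_add_cancel i 1, h]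
  exact one_ne_zero' hm (left_eq_add.mp h2)

lemma add_one_ne_self (i : Fin m) : i + 1 ≠ i := by
  intro h
  exact one_ne_zero' hm (left_eq_add.mp h.symm)

lemma sub_one_ne_add_one (i : Fin m) : i - 1 ≠ i + 1 := by
  intro h
  have h2 : i = i + 1 + 1 := by
    conv_lhs => rw [← sub_add_cancel i 1, h]
  rw [add_assoc] at h2
  have h3 : (1 : Fin m) + 1 = 0 := (left_eq_add.mp h2)
  have := congrArg Fin.val h3
  rw [val_two' hm] at this
  simp at this

lemma zero_ne_lastC : (0 : Fin m) ≠ lastC m := by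
  intro h
  have := congrArg Fin.val h
  rw [lastC_val] at this
  simp only [Fin.val_zero] at this
  omega

lemma coe_sub_one' (i : Fin m) (h : i ≠ 0) : (i - 1).val = i.val - 1 := by
  rcases m with _ | m'
  · exact absurd rfl (NeZero.ne 0)
  · rw [Fin.coe_sub_one, if_neg h]

lemma eq_lastC_of_add_one_eq_zero (i : Fin m) (h : i + 1 = 0) : i = lastC m := by
  have hv : (i + 1).val = 0 := by rw [h]; rfl
  rw [Fin.val_add, val_one' hm] at hv
  have him := i.isLt
  apply Fin.ext
  rw [lastC_val]
  rcases Nat.lt_or_ge (i.val + 1) m with hh | hh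
  · rw [Nat.mod_eq_of_lt hh] at hv; omega
  · omega

lemma add_one_eq_zero_of_lastC (h : (lastC m : Fin m) + 1 = 0 → False) : False := by
  apply h
  apply Fin.ext
  rw [Fin.val_add, val_one' hm, lastC_val]
  show (m - 1 + 1) % m = (0 : Fin m).val
  rw [Nat.sub_add_cancel (by omega), Nat.mod_self]
  rfl

lemma lastC_add_one_eq_zero : (lastC m : Fin m) + 1 = 0 := by
  apply Fin.ext
  rw [Fin.val_add, val_one' hm, lastC_val]
  show (m - 1 + 1) % m = (0 : Fin m).val
  rw [Nat.sub_add_cancel (by omega), Nat.mod_self]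
  rfl

lemma add_one_ne_zero_of_ne_lastC (i : Fin m) (h : i ≠ lastC m) : i + 1 ≠ 0 :=
  fun hh => h (eq_lastC_of_add_one_eq_zero hm i hh)

lemma val_lt_of_ne_lastC (i : Fin m) (h : i ≠ lastC m) : i.val < m - 1 := by
  have := i.isLt
  rcases Nat.lt_or_ge i.val (m - 1) with hh | hh
  · exact hh
  · exact absurd (Fin.ext (by rw [lastC_val]; omega)) h

/-- Master activation lemma: if the column positions `P` and cross vertices `C`
are active, the vertex `(i, j)` activates. -/
lemma act_mem {A : Set (Fin m × Fin n)} {i : Fin m} {j : Fin n}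
    (P : Set (Fin n)) (C : Set (Fin m × Fin n))
    (hP : ∀ p ∈ P, p ≠ j ∧ (i, p) ∈ A)
    (hC : ∀ c ∈ C, (c = (i - 1, j) ∨ c = (i + 1, j)) ∧ c ∈ A)
    (hcard : t ≤ P.ncard + C.ncard) :
    (i, j) ∈ activStep (GG m n) (fun _ => t) A := by
  refine Or.inr ?_
  show t ≤ _
  have hsub : ((fun p => (i, p)) '' P) ∪ C ⊆ (GG m n).neighborSet (i, j) ∩ A := by
    rintro w (⟨p, hp, rfl⟩ | hw)
    · obtain ⟨hpj, hpA⟩ := hP p hp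
      exact ⟨adj_iff.mpr (Or.inr ⟨rfl, fun h => hpj h.symm⟩), hpA⟩
    · obtain ⟨hw1, hw2⟩ := hC w hw
      refine ⟨?_, hw2⟩
      show (GG m n).Adj (i, j) w
      rcases hw1 with rfl | rfl <;> rw [adj_iff]
      · refine Or.inl ⟨Or.inl ?_, rfl⟩
        show (i - (i-1)).val = 1
        rw [sub_sub_cancel]; exact val_one' hm
      · refine Or.inl ⟨Or.inr ?_, rfl⟩
        show ((i+1) - i).val = 1
        rw [add_sub_cancel_left]; exact val_one' hm
  have hdisj : Disjoint ((fun p => (i, p)) '' P) C := by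
    rw [Set.disjoint_left]
    rintro w ⟨p, hp, rfl⟩ hwC
    obtain ⟨hw1, _⟩ := hC _ hwC
    have := (hP p hp).1
    rcases hw1 with h | h <;> exact this (congrArg Prod.snd h)
  calc t ≤ P.ncard + C.ncard := hcard
    _ = ((fun p => (i, p)) '' P).ncard + C.ncard := by
        rw [Set.ncard_image_of_injective _ (fun a b h => (Prod.ext_iff.mp h).2)]
    _ = (((fun p => (i, p)) '' P) ∪ C).ncard :=
        (Set.ncard_union_eq hdisj (Set.toFinite _) (Set.toFinite _)).symm
    _ ≤ _ := Set.ncard_le_ncard hsub (Set.toFinite _)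

end FinFacts

/-! ### Cardinality computations -/

lemma ncard_val_le (s : ℕ) (hs : s < n) : {q : Fin n | q.val ≤ s}.ncard = s + 1 := by
  have e : {q : Fin n | q.val ≤ s} = Set.range (Fin.castLE (show s+1 ≤ n by omega)) := by
    rw [Fin.range_castLE]; ext q; simp
  rw [e, ← Nat.card_coe_set_eq, Nat.card_range_of_injective (Fin.castLE_injective _)]
  simp

lemma ncard_val_le_diff (s : ℕ) (hs : s < n) (a : Fin n) (ha : a.val ≤ s) :
    {q : Fin n | q.val ≤ s ∧ q ≠ a}.ncard = s := by
  have e : {q : Fin n | q.val ≤ s ∧ q ≠ a} = {q : Fin n | q.val ≤ s} \ {a} := by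
    ext q; simp [and_comm]
  rw [e, Set.ncard_diff_singleton_of_mem (show a ∈ {q : Fin n | q.val ≤ s} from ha),
    ncard_val_le s hs]
  omega

lemma ncard_ne (hn : 1 ≤ n) (a : Fin n) : {q : Fin n | q ≠ a}.ncard = n - 1 := by
  have e : {q : Fin n | q ≠ a} = Set.univ \ {a} := by ext q; simp
  rw [e, Set.ncard_diff_singleton_of_mem (Set.mem_univ a), Set.ncard_univ]
  simp

lemma ncard_S0 (s s' : ℕ) (h' : s' = s + 1) (hs : s' < n) (a b : Fin n) (hab : a ≠ b)
    (ha : a.val ≤ s) (hb : b.val ≤ s) :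
    {q : Fin n | (q.val ≤ s ∧ q ≠ a ∧ q ≠ b) ∨ q.val = s'}.ncard = s := by
  subst h'
  have hs : s + 1 < n := hs
  have e : {q : Fin n | (q.val ≤ s ∧ q ≠ a ∧ q ≠ b) ∨ q.val = s+1}
      = insert (⟨s+1, hs⟩ : Fin n) (({q : Fin n | q.val ≤ s} \ {a}) \ {b}) := by
    ext q
    simp only [Set.mem_setOf_eq, Set.mem_insert_iff, Set.mem_diff, Set.mem_singleton_iff,
      Fin.ext_iff]
    constructor
    · rintro (⟨h1, h2, h3⟩ | h)
      · exact Or.inr ⟨⟨h1, fun hh => h2 (Fin.ext hh)⟩, fun hh => h3 (Fin.ext hh)⟩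
      · exact Or.inl h
    · rintro (h | ⟨⟨h1, h2⟩, h3⟩)
      · exact Or.inr h
      · exact Or.inl ⟨h1, fun hh => h2 (congrArg Fin.val hh), fun hh => h3 (congrArg Fin.val hh)⟩
  have hbm : b ∈ ({q : Fin n | q.val ≤ s} \ {a}) := ⟨hb, fun hh => hab (hh.symm ▸ rfl)⟩
  have ham : a ∈ {q : Fin n | q.val ≤ s} := ha
  have hnotm : (⟨s+1, hs⟩ : Fin n) ∉ (({q : Fin n | q.val ≤ s} \ {a}) \ {b}) := by
    intro hh
    have := hh.1.1
    simp only [Set.mem_setOf_eq] at this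
    omega
  rw [e, Set.ncard_insert_of_notMem hnotm (Set.toFinite _),
    Set.ncard_diff_singleton_of_mem hbm,
    Set.ncard_diff_singleton_of_mem ham, ncard_val_le s (by omega)]
  omega

lemma ncard_S0' (s s' : ℕ) (h' : s' = s + 1) (hs : s' < n) (b : Fin n) (hb : b.val ≤ s) :
    {q : Fin n | (q.val ≤ s ∧ q ≠ b) ∨ q.val = s'}.ncard = s + 1 := by
  subst h'
  have hs : s + 1 < n := hs
  have e : {q : Fin n | (q.val ≤ s ∧ q ≠ b) ∨ q.val = s+1}
      = insert (⟨s+1, hs⟩ : Fin n) ({q : Fin n | q.val ≤ s} \ {b}) := by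
    ext q
    simp only [Set.mem_setOf_eq, Set.mem_insert_iff, Set.mem_diff, Set.mem_singleton_iff,
      Fin.ext_iff]
    constructor
    · rintro (⟨h1, h2⟩ | h)
      · exact Or.inr ⟨h1, fun hh => h2 (Fin.ext hh)⟩
      · exact Or.inl h
    · rintro (h | ⟨h1, h2⟩)
      · exact Or.inr h
      · exact Or.inl ⟨h1, fun hh => h2 (congrArg Fin.val hh)⟩
  have hbm : b ∈ {q : Fin n | q.val ≤ s} := hb
  have hnotm : (⟨s+1, hs⟩ : Fin n) ∉ ({q : Fin n | q.val ≤ s} \ {b}) := by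
    intro hh
    have := hh.1
    simp only [Set.mem_setOf_eq] at this
    omega
  rw [e, Set.ncard_insert_of_notMem hnotm (Set.toFinite _),
    Set.ncard_diff_singleton_of_mem hbm, ncard_val_le s (by omega)]
  omega

lemma ncard_col_decomp (S : Set (Fin m × Fin n)) :
    S.ncard = ∑ i : Fin m, {q : Fin n | (i, q) ∈ S}.ncard := by
  classical
  have hS : S.Finite := Set.toFinite S
  rw [Set.ncard_eq_toFinset_card S hS,
    Finset.card_eq_sum_card_fiberwise (f := Prod.fst) (t := Finset.univ)
      (fun x _ => Finset.mem_univ _)]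
  refine Finset.sum_congr rfl fun i _ => ?_
  rw [Set.ncard_eq_toFinset_card _ (Set.toFinite {q : Fin n | (i, q) ∈ S})]
  have e : (hS.toFinset.filter (fun v => v.1 = i))
      = (Set.toFinite {q : Fin n | (i, q) ∈ S}).toFinset.image (fun q => (i, q)) := by
    ext ⟨a, b⟩
    simp only [Finset.mem_filter, Set.Finite.mem_toFinset, Finset.mem_image, Set.mem_setOf_eq,
      Prod.mk.injEq]
    constructor
    · rintro ⟨h1, rfl⟩; exact ⟨b, h1, rfl, rfl⟩
    · rintro ⟨q, hq, rfl, rfl⟩; exact ⟨hq, rfl⟩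
  rw [e, Finset.card_image_of_injective _ (fun a b h => (Prod.ext_iff.mp h).2)]

/-! ### The coloring -/

lemma exists_coloring [NeZero m] (hm : 3 ≤ m) (hn3 : 3 ≤ n) :
    ∃ x : Fin m → Fin n, ∃ e : Fin n,
      (∀ i, (x i).val ≤ 2) ∧ (∀ i, x i ≠ x (i + 1)) ∧
      e.val ≤ 2 ∧ e ≠ x 0 ∧ e ≠ x 1 := by
  set colf : ℕ → ℕ := fun a => if a = m - 1 ∧ m % 2 = 1 then 2 else a % 2 with hcolf
  have hlt : ∀ a, colf a < 3 := by
    intro a; simp only [hcolf]; split_ifs <;> omega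
  refine ⟨fun i => ⟨colf i.val, lt_of_lt_of_le (hlt _) hn3⟩, ⟨2, by omega⟩, ?_, ?_, ?_, ?_, ?_⟩
  · intro i; exact Nat.lt_succ_iff.mp (hlt _)
  · intro i
    have hv : (i + 1).val = if i.val = m - 1 then 0 else i.val + 1 := by
      rw [Fin.val_add, val_one' hm]
      split_ifs with h
      · rw [show i.val + 1 = m by omega, Nat.mod_self]
      · exact Nat.mod_eq_of_lt (by have := i.isLt; omega)
    have him : i.val < m := i.isLt
    simp only [ne_eq, Fin.mk.injEq]
    by_cases hlast : i.val = m - 1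
    · rw [hv, if_pos hlast]
      simp only [hcolf]
      split_ifs <;> first | exact not_false | omega
    · rw [hv, if_neg hlast]
      simp only [hcolf]
      split_ifs <;> first | exact not_false | omega
  · show (2 : ℕ) ≤ 2
    exact le_refl 2
  · simp only [ne_eq, Fin.ext_iff]
    show ¬((2:ℕ) = colf (0 : Fin m).val)
    have h0 : (0 : Fin m).val = 0 := rfl
    rw [h0]
    simp only [hcolf]
    split_ifs <;> first | exact not_false | omega
  · simp only [ne_eq, Fin.ext_iff]
    show ¬((2:ℕ) = colf (1 : Fin m).val)
    rw [val_one' hm]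
    simp only [hcolf]
    split_ifs <;> first | exact not_false | omega


variable {m n t : ℕ}

lemma ub_case1 [NeZero m] (hm : 3 ≤ m) (ht : 4 ≤ t) (hn : n = t - 1)
    (x : Fin m → Fin n) (hxval : ∀ i, (x i).val ≤ 2) (hxstep : ∀ i, x i ≠ x (i + 1)) :
    ∃ D : Set (Fin m × Fin n), IsDynMonopoly (GG m n) (fun _ => t) D ∧ D.ncard = m * (t - 2) := by
  have hxprev : ∀ i : Fin m, x (i - 1) ≠ x i := by
    intro i
    have := hxstep (i - 1)
    rwa [sub_add_cancel] at this
  set D : Set (Fin m × Fin n) := {v | v.2 ≠ x v.1} with hD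
  have hcardP : ∀ i : Fin m, {q : Fin n | q ≠ x i}.ncard = n - 1 :=
    fun i => ncard_ne (by omega) _
  have key : ∀ (A : Set (Fin m × Fin n)) (i : Fin m),
      (∀ q : Fin n, q ≠ x i → (i, q) ∈ A) → (i - 1, x i) ∈ A → (i + 1, x i) ∈ A →
      (i, x i) ∈ activStep (GG m n) (fun _ => t) A := by
    intro A i hcol hc1 hc2
    refine act_mem hm {q : Fin n | q ≠ x i} {(i - 1, x i), (i + 1, x i)} ?_ ?_ ?_
    · exact fun p hp => ⟨hp, hcol p hp⟩
    · rintro c (rfl | rfl)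
      · exact ⟨Or.inl rfl, hc1⟩
      · exact ⟨Or.inr rfl, hc2⟩
    · rw [hcardP, Set.ncard_pair (fun hh => sub_one_ne_add_one hm i (congrArg Prod.fst hh))]
      omega
  have s0 : (D ∪ {v : Fin m × Fin n | v.1 ≠ lastC m}) ⊆ activStep (GG m n) (fun _ => t) D := by
    rintro ⟨i, j⟩ (h | h)
    · exact subset_activStep _ _ _ h
    · by_cases hj : j = x i
      · subst hj
        exact key D i (fun q hq => hq) (hxprev i).symm (hxstep i)
      · exact subset_activStep _ _ _ hj
  have s1 : Set.univ ⊆ activStep (GG m n) (fun _ => t) (D ∪ {v : Fin m × Fin n | v.1 ≠ lastC m}) := by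
    rintro ⟨i, j⟩ -
    by_cases hi : i = lastC m
    · by_cases hj : j = x i
      · subst hj
        refine key _ i (fun q hq => Or.inl hq) (Or.inr ?_) (Or.inr ?_)
        · show i - 1 ≠ lastC m
          rw [hi]
          exact sub_one_ne_self hm _
        · show i + 1 ≠ lastC m
          rw [hi, lastC_add_one_eq_zero hm]
          exact zero_ne_lastC hm
      · exact subset_activStep _ _ _ (Or.inl hj)
    · exact subset_activStep _ _ _ (Or.inr hi)
  refine ⟨D, isDynMonopoly_of_reaches ((Reaches.step s0).trans (Reaches.step s1)), ?_⟩
  rw [ncard_col_decomp]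
  have hfib : ∀ i : Fin m, {q : Fin n | (i, q) ∈ D}.ncard = t - 2 := by
    intro i
    have e : {q : Fin n | (i, q) ∈ D} = {q : Fin n | q ≠ x i} := rfl
    rw [e, hcardP]
    omega
  rw [Finset.sum_congr rfl (fun i _ => hfib i)]
  simp [Finset.sum_const, Finset.card_univ, mul_comm]


variable {m n t : ℕ}

lemma ub_case2 [NeZero m] (hm : 3 ≤ m) (ht : 4 ≤ t) (hn : t ≤ n)
    (x : Fin m → Fin n) (e : Fin n)
    (hxval : ∀ i, (x i).val ≤ 2) (hxstep : ∀ i, x i ≠ x (i + 1))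
    (heval : e.val ≤ 2) (he0 : e ≠ x 0) (he1 : e ≠ x 1) :
    ∃ D : Set (Fin m × Fin n), IsDynMonopoly (GG m n) (fun _ => t) D ∧ D.ncard = m * (t - 2) := by
  have hxprev : ∀ i : Fin m, x (i - 1) ≠ x i := by
    intro i
    have := hxstep (i - 1)
    rwa [sub_add_cancel] at this
  have hx2 : ∀ i, (x i).val ≤ t - 2 := fun i => le_trans (hxval i) (by omega)
  have he2 : e.val ≤ t - 2 := le_trans heval (by omega)
  have hzeroadd : (0 : Fin m) + 1 = 1 := zero_add 1
  have hx01 : x 0 ≠ x 1 := by have := hxstep 0; rwa [hzeroadd] at this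
  have h01 : (0 : Fin m) + 1 ≠ 0 := by rw [hzeroadd]; exact one_ne_zero' hm
  set D : Set (Fin m × Fin n) :=
    {v | if v.1 = 0 then ((v.2.val ≤ t-2 ∧ v.2 ≠ x 0 ∧ v.2 ≠ e) ∨ v.2.val = t-1)
         else (v.2.val ≤ t-2 ∧ v.2 ≠ x v.1)} with hDdef
  have hD0 : ∀ q : Fin n, ((q.val ≤ t-2 ∧ q ≠ x 0 ∧ q ≠ e) ∨ q.val = t-1) →
      ((0 : Fin m), q) ∈ D := by
    intro q hq
    rw [hDdef]
    simp only [Set.mem_setOf_eq]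
    rw [if_pos trivial]
    exact hq
  have hDne : ∀ (i : Fin m), i ≠ 0 → ∀ q : Fin n, q.val ≤ t-2 → q ≠ x i → (i, q) ∈ D := by
    intro i hi q h1 h2
    rw [hDdef]
    simp only [Set.mem_setOf_eq]
    rw [if_neg hi]
    exact ⟨h1, h2⟩
  set A1 : Set (Fin m × Fin n) := D ∪ {v | v.2 = x v.1 ∧ v.1 ≠ lastC m} with hA1def
  set A2 : Set (Fin m × Fin n) := insert ((0 : Fin m), e) A1 with hA2def
  set A3 : ℕ → Set (Fin m × Fin n) := fun k => A2 ∪ {v | v.1.val ≤ k} with hA3def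
  have hA1x : ∀ i : Fin m, i ≠ lastC m → (i, x i) ∈ A1 := fun i hi => Or.inr ⟨rfl, hi⟩
  have h0lastC : (0 : Fin m) ≠ lastC m := zero_ne_lastC hm
  have hA1col : ∀ (i : Fin m), i ≠ 0 → i ≠ lastC m → ∀ q : Fin n, q.val ≤ t-2 →
      (i, q) ∈ A1 := by
    intro i hi0 hil q hq
    by_cases hqx : q = x i
    · subst hqx; exact hA1x i hil
    · exact Or.inl (hDne i hi0 q hq hqx)
  have hA1col0 : ∀ q : Fin n, ((q.val ≤ t-2 ∧ q ≠ e) ∨ q.val = t-1) → ((0:Fin m), q) ∈ A1 := by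
    intro q hq
    rcases hq with ⟨h1, h2⟩ | h1
    · by_cases hqx : q = x 0
      · subst hqx; exact hA1x 0 h0lastC
      · exact Or.inl (hD0 q (Or.inl ⟨h1, hqx, h2⟩))
    · exact Or.inl (hD0 q (Or.inr h1))
  have hA2col0 : ∀ q : Fin n, q.val ≤ t-1 → ((0:Fin m), q) ∈ A2 := by
    intro q hq
    rcases Nat.lt_or_ge q.val (t-1) with h | h
    · by_cases hqe : q = e
      · subst hqe; exact Set.mem_insert _ _
      · exact Set.mem_insert_of_mem _ (hA1col0 q (Or.inl ⟨by omega, hqe⟩))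
    · exact Set.mem_insert_of_mem _ (hA1col0 q (Or.inr (by omega)))
  -- step 0 : `A1 ⊆ activStep D`
  have s0 : A1 ⊆ activStep (GG m n) (fun _ => t) D := by
    rintro ⟨i, j⟩ (h | hj)
    · exact subset_activStep _ _ _ h
    · obtain ⟨hj, hil⟩ := hj
      simp only at hj hil
      subst hj
      by_cases hi0 : i = 0
      · subst hi0
        refine act_mem hm {q : Fin n | (q.val ≤ t-2 ∧ q ≠ x 0 ∧ q ≠ e) ∨ q.val = t-1}
          {((0:Fin m) - 1, x 0), ((0:Fin m) + 1, x 0)} ?_ ?_ ?_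
        · rintro p (⟨h1, h2, h3⟩ | h1)
          · exact ⟨h2, hD0 p (Or.inl ⟨h1, h2, h3⟩)⟩
          · refine ⟨fun hh => ?_, hD0 p (Or.inr h1)⟩
            rw [hh] at h1
            have := hxval 0
            omega
        · rintro c (rfl | rfl)
          · exact ⟨Or.inl rfl, hDne _ (sub_one_ne_self hm 0) _ (hx2 0) (hxprev 0).symm⟩
          · refine ⟨Or.inr rfl, hDne _ h01 _ (hx2 0) ?_⟩
            rw [hzeroadd]; exact hx01
        · rw [ncard_S0 (t-2) (t-1) (by omega) (by omega) (x 0) e (fun hh => he0 hh.symm) (hx2 0) he2,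
            Set.ncard_pair (fun hh => sub_one_ne_add_one hm 0 (congrArg Prod.fst hh))]
          omega
      · refine act_mem hm {q : Fin n | q.val ≤ t-2 ∧ q ≠ x i} {(i - 1, x i), (i + 1, x i)}
          ?_ ?_ ?_
        · rintro p ⟨h1, h2⟩; exact ⟨h2, hDne i hi0 p h1 h2⟩
        · rintro c (rfl | rfl)
          · refine ⟨Or.inl rfl, ?_⟩
            by_cases hi1 : i - 1 = 0
            · have hieq : i = 1 := by
                have := sub_eq_zero.mp hi1
                simpa using this
              rw [hi1]
              refine hD0 _ (Or.inl ⟨hx2 i, ?_, ?_⟩)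
              · rw [hieq]; exact hx01.symm
              · rw [hieq]; exact fun hh => he1 hh.symm
            · exact hDne _ hi1 _ (hx2 i) (hxprev i).symm
          · exact ⟨Or.inr rfl, hDne _ (add_one_ne_zero_of_ne_lastC hm i hil) _ (hx2 i) (hxstep i)⟩
        · rw [ncard_val_le_diff (t-2) (by omega) (x i) (hx2 i),
            Set.ncard_pair (fun hh => sub_one_ne_add_one hm i (congrArg Prod.fst hh))]
          omega
  -- step 1 : `A2 ⊆ activStep A1`
  have s1 : A2 ⊆ activStep (GG m n) (fun _ => t) A1 := by
    rintro v hv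
    rcases Set.mem_insert_iff.mp hv with rfl | h
    · refine act_mem hm {q : Fin n | (q.val ≤ t-2 ∧ q ≠ e) ∨ q.val = t-1}
        {((0:Fin m) + 1, e)} ?_ ?_ ?_
      · rintro p (⟨h1, h2⟩ | h1)
        · exact ⟨h2, hA1col0 p (Or.inl ⟨h1, h2⟩)⟩
        · refine ⟨fun hh => ?_, hA1col0 p (Or.inr h1)⟩
          rw [hh] at h1
          omega
      · rintro c rfl
        refine ⟨Or.inr rfl, Or.inl (hDne _ h01 _ he2 ?_)⟩
        rw [hzeroadd]; exact he1
      · rw [ncard_S0' (t-2) (t-1) (by omega) (by omega) e he2, Set.ncard_singleton]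
        omega
    · exact subset_activStep _ _ _ h
  -- step 2 : `A3 0 ⊆ activStep A2`
  have s2 : A3 0 ⊆ activStep (GG m n) (fun _ => t) A2 := by
    rintro ⟨i, j⟩ (h | h)
    · exact subset_activStep _ _ _ h
    · simp only [Set.mem_setOf_eq] at h
      have hi0 : i = 0 := Fin.ext (by simpa using h)
      subst hi0
      rcases Nat.lt_or_ge (t-1) j.val with hj | hj
      · refine act_mem hm {q : Fin n | q.val ≤ t-1} (∅ : Set (Fin m × Fin n)) ?_
          (fun c hc => hc.elim) ?_
        · intro p hp
          have hp' : p.val ≤ t-1 := hp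
          refine ⟨fun hh => ?_, hA2col0 p hp'⟩
          rw [hh] at hp'
          omega
        · rw [ncard_val_le (t-1) (by omega), Set.ncard_empty]
          omega
      · exact subset_activStep _ _ _ (hA2col0 j hj)
  have hA2subA3 : ∀ k, A2 ⊆ A3 k := fun k => Set.subset_union_left
  -- step 3 : cascade
  have s3 : ∀ k : ℕ, k + 1 ≤ m - 2 → A3 (k+1) ⊆ activStep (GG m n) (fun _ => t) (A3 k) := by
    intro k hk
    rintro ⟨i, j⟩ (h | h)
    · exact subset_activStep _ _ _ (hA2subA3 k h)
    · simp only [Set.mem_setOf_eq] at h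
      rcases Nat.lt_or_ge k i.val with h2 | h2
      swap
      · exact subset_activStep _ _ _ (Or.inr h2)
      · have hival : i.val = k + 1 := by omega
        have hi0 : i ≠ 0 := by
          intro hh
          rw [hh] at hival
          simp at hival
        have hil : i ≠ lastC m := by
          intro hh
          rw [hh, lastC_val] at hival
          omega
        rcases Nat.lt_or_ge (t-2) j.val with hj | hj
        · refine act_mem hm {q : Fin n | q.val ≤ t-2} {(i - 1, j)} ?_ ?_ ?_
          · intro p hp
            have hp' : p.val ≤ t-2 := hp
            refine ⟨fun hh => ?_, hA2subA3 k (Set.mem_insert_of_mem _ (hA1col i hi0 hil p hp'))⟩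
            rw [hh] at hp'
            omega
          · rintro c rfl
            refine ⟨Or.inl rfl, Or.inr ?_⟩
            show (i - 1).val ≤ k
            rw [coe_sub_one' hm i hi0]
            omega
          · rw [ncard_val_le (t-2) (by omega), Set.ncard_singleton]
            omega
        · exact subset_activStep _ _ _
            (hA2subA3 k (Set.mem_insert_of_mem _ (hA1col i hi0 hil j hj)))
  -- step 4 : final column
  have s4 : Set.univ ⊆ activStep (GG m n) (fun _ => t) (A3 (m - 2)) := by
    rintro ⟨i, j⟩ -
    rcases Nat.lt_or_ge (m-2) i.val with hi | hi
    swap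
    · exact subset_activStep _ _ _ (Or.inr hi)
    · have hil : i = lastC m := by
        apply Fin.ext
        rw [lastC_val]
        have := i.isLt
        omega
      have hi0 : i ≠ 0 := by
        rw [hil]
        exact fun hh => zero_ne_lastC hm hh.symm
      by_cases hmem : j.val ≤ t-2 ∧ j ≠ x i
      · exact subset_activStep _ _ _
          (hA2subA3 _ (Set.mem_insert_of_mem _ (Or.inl (hDne i hi0 j hmem.1 hmem.2))))
      · refine act_mem hm {q : Fin n | q.val ≤ t-2 ∧ q ≠ x i} {(i - 1, j), (i + 1, j)} ?_ ?_ ?_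
        · rintro p ⟨h1, h2⟩
          refine ⟨fun hh => hmem ⟨hh ▸ h1, hh ▸ h2⟩,
            hA2subA3 _ (Set.mem_insert_of_mem _ (Or.inl (hDne i hi0 p h1 h2)))⟩
        · rintro c (rfl | rfl)
          · refine ⟨Or.inl rfl, Or.inr ?_⟩
            show (i - 1).val ≤ m - 2
            rw [coe_sub_one' hm i hi0, hil, lastC_val]
            omega
          · refine ⟨Or.inr rfl, Or.inr ?_⟩
            show (i + 1).val ≤ m - 2
            rw [hil, lastC_add_one_eq_zero hm]
            show (0 : Fin m).val ≤ m - 2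
            simp
        · rw [ncard_val_le_diff (t-2) (by omega) (x i) (hx2 i),
            Set.ncard_pair (fun hh => sub_one_ne_add_one hm i (congrArg Prod.fst hh))]
          omega
  -- assemble the reachability chain
  have hreach : ∀ k : ℕ, k ≤ m - 2 → Reaches (GG m n) (fun _ => t) D (A3 k) := by
    intro k
    induction k with
    | zero =>
      intro _
      exact ((Reaches.step s0).trans (Reaches.step s1)).trans (Reaches.step s2)
    | succ k ih =>
      intro hk
      exact (ih (by omega)).trans (Reaches.step (s3 k hk))
  have hmono : Reaches (GG m n) (fun _ => t) D Set.univ :=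
    (hreach (m-2) le_rfl).trans (Reaches.step s4)
  -- cardinality
  have hfib : ∀ i : Fin m, {q : Fin n | (i, q) ∈ D}.ncard = t - 2 := by
    intro i
    by_cases hi : i = 0
    · subst hi
      have e1 : {q : Fin n | ((0:Fin m), q) ∈ D}
          = {q : Fin n | (q.val ≤ t-2 ∧ q ≠ x 0 ∧ q ≠ e) ∨ q.val = t-1} := by
        ext q
        rw [hDdef]
        simp only [Set.mem_setOf_eq]
        rw [if_pos trivial]
      rw [e1, ncard_S0 (t-2) (t-1) (by omega) (by omega) (x 0) e (fun hh => he0 hh.symm) (hx2 0) he2]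
    · have e1 : {q : Fin n | (i, q) ∈ D} = {q : Fin n | q.val ≤ t-2 ∧ q ≠ x i} := by
        ext q
        rw [hDdef]
        simp only [Set.mem_setOf_eq]
        rw [if_neg hi]
      rw [e1, ncard_val_le_diff (t-2) (by omega) (x i) (hx2 i)]
  refine ⟨D, isDynMonopoly_of_reaches hmono, ?_⟩
  rw [ncard_col_decomp, Finset.sum_congr rfl (fun i _ => hfib i)]
  simp [Finset.sum_const, Finset.card_univ, mul_comm]


variable {m n t : ℕ}

lemma lb [NeZero m] (hm : 3 ≤ m) (ht : 4 ≤ t) (hn : t - 1 ≤ n) {D : Set (Fin m × Fin n)}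
    (hD : IsDynMonopoly (GG m n) (fun _ => t) D) : m * (t - 2) ≤ D.ncard := by
  have hcol : ∀ i : Fin m, t - 2 ≤ {q : Fin n | (i, q) ∈ D}.ncard := by
    intro i
    by_contra hlt
    push_neg at hlt
    have key : ∀ k : ℕ, ∀ q : Fin n,
        (i, q) ∈ (activStep (GG m n) (fun _ => t))^[k] D → (i, q) ∈ D := by
      intro k
      induction k with
      | zero => exact fun q h => h
      | succ k ih =>
        intro q hq
        rw [Function.iterate_succ_apply'] at hq
        rcases hq with hq | hq
        · exact ih q hq
        · exfalso
          have hq' : t ≤ ((GG m n).neighborSet (i, q)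
              ∩ (activStep (GG m n) (fun _ => t))^[k] D).ncard := hq
          have hb : (GG m n).neighborSet (i, q) ∩ (activStep (GG m n) (fun _ => t))^[k] D
              ⊆ ((fun p => (i, p)) '' {p : Fin n | (i, p) ∈ D}) ∪ {(i - 1, q), (i + 1, q)} := by
            rintro ⟨a, b⟩ ⟨hadj, hmem⟩
            rw [SimpleGraph.mem_neighborSet, adj_iff] at hadj
            rcases hadj with ⟨hcyc, hsnd⟩ | ⟨hfst, hsnd⟩
            · have hsnd' : q = b := hsnd
              subst hsnd'
              refine Or.inr ?_
              rcases hcyc with h1 | h1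
              · have h2 : i - a = 1 := Fin.ext (by rw [h1, val_one' hm])
                have ha : a = i - 1 := by
                  rw [(sub_eq_iff_eq_add).mp h2]
                  rw [add_sub_cancel_left]
                exact Set.mem_insert_iff.mpr (Or.inl (by rw [ha]))
              · have h2 : a - i = 1 := Fin.ext (by rw [h1, val_one' hm])
                have ha : a = i + 1 := by
                  rw [(sub_eq_iff_eq_add).mp h2, add_comm]
                refine Set.mem_insert_iff.mpr (Or.inr ?_)
                rw [Set.mem_singleton_iff, ha]
            · have hfst' : i = a := hfst
              subst hfst'
              exact Or.inl ⟨b, ih b hmem, rfl⟩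
          have hcard := Set.ncard_le_ncard hb (Set.toFinite _)
          have h2 : ((fun p => (i, p)) '' {p : Fin n | (i, p) ∈ D}).ncard ≤ t - 3 := by
            rw [Set.ncard_image_of_injective _ (fun a b h => (Prod.ext_iff.mp h).2)]
            omega
          have h3 : ({(i - 1, q), (i + 1, q)} : Set (Fin m × Fin n)).ncard ≤ 2 := by
            refine le_trans (Set.ncard_insert_le _ _) ?_
            rw [Set.ncard_singleton]
          have h4 := Set.ncard_union_le ((fun p => (i, p)) '' {p : Fin n | (i, p) ∈ D})
            ({(i - 1, q), (i + 1, q)} : Set (Fin m × Fin n))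
          omega
    obtain ⟨K, hK⟩ := hD
    have hall : ∀ q : Fin n, (i, q) ∈ D := fun q => key K q (by rw [hK]; trivial)
    have huniv : {q : Fin n | (i, q) ∈ D} = Set.univ := Set.eq_univ_of_forall hall
    rw [huniv, Set.ncard_univ, Nat.card_eq_fintype_card, Fintype.card_fin] at hlt
    omega
  rw [ncard_col_decomp]
  calc m * (t - 2) = ∑ _i : Fin m, (t - 2) := by
        simp [Finset.sum_const, Finset.card_univ, mul_comm]
    _ ≤ ∑ i : Fin m, {q : Fin n | (i, q) ∈ D}.ncard :=
        Finset.sum_le_sum (fun i _ => hcol i)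


end DynCK

open DynCK in
/-- For `m ≥ 3`, `t ≥ 4`, `n ≥ t − 1`, `dyn_t(C_m □ K_n) = m(t−2)`. -/
theorem dyn_cycle_complete (m n t : ℕ) (hm : 3 ≤ m) (ht : 4 ≤ t) (hn : t - 1 ≤ n) :
    dynNumC ((cycleGraph m).boxProd (completeGraph (Fin n))) t = m * (t - 2) := by
  haveI : NeZero m := ⟨by omega⟩
  obtain ⟨x, e, hxval, hxstep, heval, he0, he1⟩ := exists_coloring (n := n) hm (by omega)
  have hub : ∃ D : Set (Fin m × Fin n),
      IsDynMonopoly (GG m n) (fun _ => t) D ∧ D.ncard = m * (t - 2) := by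
    rcases Nat.lt_or_ge n t with h | h
    · exact ub_case1 hm ht (by omega) x hxval hxstep
    · exact ub_case2 hm ht h x e hxval hxstep heval he0 he1
  obtain ⟨D, hD1, hD2⟩ := hub
  unfold dynNumC dynNum
  apply le_antisymm
  · exact Nat.sInf_le ⟨D, hD1, hD2⟩
  · refine le_csInf ⟨m * (t - 2), ?_⟩ ?_
    · exact ⟨D, hD1, hD2⟩
    · rintro b ⟨D', hD', rfl⟩
      exact lb hm ht hn hD'
end
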